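/- arXiv:2605.27279 — 6 statements merged into one kernel-verified Lean document; each statement's English description precedes it below -/
import Mathlib

section
/- Let (A, I) and (B, J) be pairs of a commutative ring and a principal ideal such that I·A_{I-tor} = 0 and J·B_{J-tor} = 0, and let Φ : A/I → B/J be a ring homomorphism. If there exists a homomorphism of (possibly non-unital) rings Φ_tor : A_{I-tor} → B_{J-tor} such that Φ ∘ φ_{I,A} = φ_{J,B} ∘ Φ_tor, then Φ extends to a morphism of graded rings Φ• : gr_I(A) → gr_J(B) (i.e., a graded ring homomorphism whose degree-0 component is Φ). -/
open Submodule

section Preamble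

variable {A : Type*} [CommRing A]

/-- The submodule of `I`-torsion elements: elements killed by a power of each element of `I`. -/
def Itor (I : Ideal A) (M : Type*) [AddCommGroup M] [Module A M] : Submodule A M where
  carrier := {x | ∀ a ∈ I, ∃ n : ℕ, a ^ n • x = 0}
  zero_mem' := fun a _ => ⟨1, smul_zero _⟩
  add_mem' := by
    rintro x y hx hy a ha
    obtain ⟨n, hn⟩ := hx a ha
    obtain ⟨m, hm⟩ := hy a ha
    refine ⟨n + m, ?_⟩
    have h1 : a ^ (n + m) • x = 0 := by
      rw [pow_add, mul_comm, mul_smul, hn, smul_zero]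
    have h2 : a ^ (n + m) • y = 0 := by
      rw [pow_add, mul_smul, hm, smul_zero]
    rw [smul_add, h1, h2, add_zero]
  smul_mem' := by
    rintro c x hx a ha
    obtain ⟨n, hn⟩ := hx a ha
    exact ⟨n, by rw [smul_comm, hn, smul_zero]⟩

lemma mem_pow_zero (I : Ideal A) (x : A) : x ∈ I ^ 0 := by
  simp [Ideal.one_eq_top]

lemma mul_mem_pow_add {I : Ideal A} {m n : ℕ} {x y : A}
    (hx : x ∈ I ^ m) (hy : y ∈ I ^ n) : x * y ∈ I ^ (m + n) := by
  rw [pow_add]; exact Ideal.mul_mem_mul hx hy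

/-- The `n`-th graded piece `Iⁿ/Iⁿ⁺¹` of the conormal cone of `(A, I)`. -/
abbrev GrPiece (I : Ideal A) (n : ℕ) :=
  (I ^ n : Ideal A) ⧸ (Submodule.comap (I ^ n : Ideal A).subtype (I ^ (n + 1) : Ideal A))

/-- Class of an element of `Iⁿ` in the graded piece `Iⁿ/Iⁿ⁺¹`. -/
def grMk (I : Ideal A) (n : ℕ) (x : A) (hx : x ∈ I ^ n) : GrPiece I n :=
  Submodule.Quotient.mk ⟨x, hx⟩

lemma grMk_eq_iff (I : Ideal A) (n : ℕ) {x y : A} (hx : x ∈ I ^ n) (hy : y ∈ I ^ n) :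
    grMk I n x hx = grMk I n y hy ↔ x - y ∈ I ^ (n + 1) := by
  rw [grMk, grMk, Submodule.Quotient.eq]
  rfl

/-- The map on graded pieces induced by a ring homomorphism `f` with `f(Iⁿ) ⊆ Jⁿ`. -/
def grMap {B : Type*} [CommRing B] (f : A →+* B) (I : Ideal A) (J : Ideal B)
    (hf : ∀ n, ∀ x ∈ I ^ n, f x ∈ J ^ n) (n : ℕ) :
    GrPiece I n → GrPiece J n := by
  refine Quotient.lift (fun x => grMk J n (f x.1) (hf n x.1 x.2)) ?_
  intro x y hxy
  rw [grMk_eq_iff]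
  have hxy0 : x - y ∈ Submodule.comap (I ^ n : Ideal A).subtype (I ^ (n + 1) : Ideal A) :=
    Submodule.quotientRel_def _ |>.mp hxy
  have hxy' : (x : A) - (y : A) ∈ I ^ (n + 1) := hxy0
  have := hf (n + 1) _ hxy'
  rwa [map_sub] at this

@[simp] lemma grMap_mk {B : Type*} [CommRing B] (f : A →+* B) (I : Ideal A) (J : Ideal B)
    (hf : ∀ n, ∀ x ∈ I ^ n, f x ∈ J ^ n) (n : ℕ) (x : A) (hx : x ∈ I ^ n) :
    grMap f I J hf n (grMk I n x hx) = grMk J n (f x) (hf n x hx) := rfl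


lemma gen_mem {I : Ideal A} {a : A} (h : I = Ideal.span {a}) : a ∈ I := by
  rw [h]; exact Ideal.mem_span_singleton_self a

lemma gen_mem_pow_one {I : Ideal A} {a : A} (h : I = Ideal.span {a}) : a ∈ I ^ 1 := by
  rw [pow_one]; exact gen_mem h

lemma mem_pow_one {I : Ideal A} {a : A} (ha : a ∈ I) : a ∈ I ^ 1 := by
  rwa [pow_one]

lemma mul_mem_Itor {I : Ideal A} {x y : A} (hy : y ∈ Itor I A) :
    x * y ∈ Itor I A := by
  simpa using (Itor I A).smul_mem x hy

/-- `g` is a morphism of graded rings `gr_I(A) → gr_J(B)` whose degree-0 component is `Φ`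
(under the canonical identifications `gr⁰_I(A) = A/I`, `gr⁰_J(B) = B/J`). -/
def IsGradedHom {B : Type*} [CommRing B] (I : Ideal A) (J : Ideal B)
    (Φ : A ⧸ I →+* B ⧸ J) (g : ∀ n, GrPiece I n →+ GrPiece J n) : Prop :=
  (∀ (x : A) (u : B), Φ (Ideal.Quotient.mk I x) = Ideal.Quotient.mk J u →
      g 0 (grMk I 0 x (mem_pow_zero I x)) = grMk J 0 u (mem_pow_zero J u)) ∧
  (∀ (m n : ℕ) (x y : A) (hx : x ∈ I ^ m) (hy : y ∈ I ^ n) (u v : B) (hu : u ∈ J ^ m)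
      (hv : v ∈ J ^ n),
      g m (grMk I m x hx) = grMk J m u hu →
      g n (grMk I n y hy) = grMk J n v hv →
      g (m + n) (grMk I (m + n) (x * y) (mul_mem_pow_add hx hy)) =
        grMk J (m + n) (u * v) (mul_mem_pow_add hu hv))

/-- `f : A_{I-tor} → B_{J-tor}` is a homomorphism of (possibly non-unital) rings such that
`Φ ∘ φ_{I,A} = φ_{J,B} ∘ f`. -/
def IsTorsionHom {B : Type*} [CommRing B] (I : Ideal A) (J : Ideal B)
    (Φ : A ⧸ I →+* B ⧸ J)
    (f : Itor I A → Itor J B) : Prop :=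
  (∀ x y, f (x + y) = f x + f y) ∧
  (∀ x y : Itor I A,
      f ⟨x.1 * y.1, mul_mem_Itor y.2⟩ = ⟨(f x).1 * (f y).1, mul_mem_Itor (f y).2⟩) ∧
  (∀ x : Itor I A,
      Φ (Ideal.Quotient.mk I x.1) = Ideal.Quotient.mk J (f x).1)

end Preamble

section MyAux

variable {A B : Type*} [CommRing A] [CommRing B]

/-- A choice of lift of `Φ (mk x)` to `B`. -/
noncomputable def Lft (I : Ideal A) (J : Ideal B) (Φ : A ⧸ I →+* B ⧸ J) (x : A) : B :=
  Quotient.out (Φ (Ideal.Quotient.mk I x))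

lemma mk_Lft (I : Ideal A) (J : Ideal B) (Φ : A ⧸ I →+* B ⧸ J) (x : A) :
    Ideal.Quotient.mk J (Lft I J Φ x) = Φ (Ideal.Quotient.mk I x) :=
  Quotient.out_eq _

lemma Lft_sub_mem (I : Ideal A) (J : Ideal B) (Φ : A ⧸ I →+* B ⧸ J) {x : A} {u : B}
    (h : Ideal.Quotient.mk J u = Φ (Ideal.Quotient.mk I x)) : Lft I J Φ x - u ∈ J := by
  rw [← mk_Lft I J Φ x] at h
  exact Ideal.Quotient.eq.mp h.symm

lemma mem_pow_iff' {I : Ideal A} {a : A} (ha : I = Ideal.span {a}) (n : ℕ) (x : A) :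
    x ∈ I ^ n ↔ ∃ t, a ^ n * t = x := by
  rw [ha, Ideal.span_singleton_pow]
  constructor
  · intro h
    obtain ⟨c, hc⟩ := Ideal.mem_span_singleton'.mp h
    exact ⟨c, by rw [mul_comm]; exact hc⟩
  · rintro ⟨t, rfl⟩
    exact Ideal.mul_mem_right _ _ (Ideal.mem_span_singleton_self _)

lemma gen_pow_mem {I : Ideal A} {a : A} (ha : I = Ideal.span {a}) (n : ℕ) : a ^ n ∈ I ^ n :=
  Ideal.pow_mem_pow (gen_mem ha) n

variable {I : Ideal A} {J : Ideal B} {a : A} {b : B}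

/-- Key lemma: if `aⁿ s = 0` then `bⁿ · (lift of Φ(s̄)) ∈ Jⁿ⁺¹`. -/
lemma keyK (ha : I = Ideal.span {a}) (hb : J = Ideal.span {b})
    (hJtor : ∀ b' ∈ J, ∀ y ∈ Itor J B, b' * y = 0)
    (Φ : A ⧸ I →+* B ⧸ J) (f : ↥(Itor I A) → ↥(Itor J B)) (hf : IsTorsionHom I J Φ f)
    (n : ℕ) {s : A} (hs : a ^ n * s = 0) :
    b ^ n * Lft I J Φ s ∈ J ^ (n + 1) := by
  cases n with
  | zero =>
    rw [pow_zero, one_mul] at hs ⊢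
    subst hs
    rw [pow_one]
    rw [← Ideal.Quotient.eq_zero_iff_mem, mk_Lft, map_zero, map_zero]
  | succ k =>
    have hsItor : s ∈ Itor I A := by
      intro a' ha'
      rw [ha] at ha'
      obtain ⟨c, hc⟩ := Ideal.mem_span_singleton'.mp ha'
      refine ⟨k + 1, ?_⟩
      rw [smul_eq_mul, ← hc, mul_pow]
      calc c ^ (k + 1) * a ^ (k + 1) * s = c ^ (k + 1) * (a ^ (k + 1) * s) := by ring
        _ = 0 := by rw [hs, mul_zero]
    set w : ↥(Itor J B) := f ⟨s, hsItor⟩ with hw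
    have hmk : Φ (Ideal.Quotient.mk I s) = Ideal.Quotient.mk J w.1 := hf.2.2 ⟨s, hsItor⟩
    have hsub : Lft I J Φ s - w.1 ∈ J := Lft_sub_mem I J Φ hmk.symm
    have hbw : b * w.1 = 0 := hJtor b (gen_mem hb) w.1 w.2
    have : b ^ (k + 1) * Lft I J Φ s =
        b ^ (k + 1) * (Lft I J Φ s - w.1) + b ^ k * (b * w.1) := by ring
    rw [this, hbw, mul_zero, add_zero]
    exact mul_mem_pow_add (gen_pow_mem hb (k + 1)) (mem_pow_one hsub)

/-- Well-definedness: congruent representatives yield congruent images. -/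
lemma keyW (ha : I = Ideal.span {a}) (hb : J = Ideal.span {b})
    (hJtor : ∀ b' ∈ J, ∀ y ∈ Itor J B, b' * y = 0)
    (Φ : A ⧸ I →+* B ⧸ J) (f : ↥(Itor I A) → ↥(Itor J B)) (hf : IsTorsionHom I J Φ f)
    (n : ℕ) {t t' : A} (h : a ^ n * t - a ^ n * t' ∈ I ^ (n + 1)) :
    b ^ n * Lft I J Φ t - b ^ n * Lft I J Φ t' ∈ J ^ (n + 1) := by
  obtain ⟨c, hc⟩ := (mem_pow_iff' ha (n + 1) _).mp h
  have hz : a ^ n * (t - t' - a * c) = 0 := by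
    have : a ^ (n + 1) * c = a ^ n * t - a ^ n * t' := hc
    calc a ^ n * (t - t' - a * c)
        = (a ^ n * t - a ^ n * t') - a ^ (n + 1) * c := by ring
      _ = 0 := by rw [← this]; ring
  have hK : b ^ n * Lft I J Φ (t - t' - a * c) ∈ J ^ (n + 1) :=
    keyK ha hb hJtor Φ f hf n hz
  have hmkac : Ideal.Quotient.mk I (a * c) = 0 := by
    rw [Ideal.Quotient.eq_zero_iff_mem]
    exact I.mul_mem_right c (gen_mem ha)
  have hcong : Lft I J Φ (t - t' - a * c) - (Lft I J Φ t - Lft I J Φ t') ∈ J := by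
    rw [← Ideal.Quotient.eq_zero_iff_mem]
    simp only [map_sub, mk_Lft, hmkac, map_zero, sub_zero]
    ring
  have heq : b ^ n * Lft I J Φ t - b ^ n * Lft I J Φ t' =
      b ^ n * Lft I J Φ (t - t' - a * c)
        - b ^ n * (Lft I J Φ (t - t' - a * c) - (Lft I J Φ t - Lft I J Φ t')) := by ring
  rw [heq]
  exact sub_mem hK (mul_mem_pow_add (gen_pow_mem hb n) (mem_pow_one hcong))

/-- The raw graded map. -/
noncomputable def gAux (ha : I = Ideal.span {a}) (hb : J = Ideal.span {b})
    (hJtor : ∀ b' ∈ J, ∀ y ∈ Itor J B, b' * y = 0)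
    (Φ : A ⧸ I →+* B ⧸ J) (f : ↥(Itor I A) → ↥(Itor J B)) (hf : IsTorsionHom I J Φ f)
    (n : ℕ) : GrPiece I n → GrPiece J n := by
  refine Quotient.lift
    (fun x : (I ^ n : Ideal A) =>
      grMk J n (b ^ n * Lft I J Φ (Classical.choose ((mem_pow_iff' ha n x.1).mp x.2)))
        (Ideal.mul_mem_right _ _ (gen_pow_mem hb n))) ?_
  intro x y hxy
  have hxy0 : x - y ∈ Submodule.comap (I ^ n : Ideal A).subtype (I ^ (n + 1) : Ideal A) :=
    Submodule.quotientRel_def _ |>.mp hxy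
  have hxy' : (x : A) - (y : A) ∈ I ^ (n + 1) := hxy0
  have hx := Classical.choose_spec ((mem_pow_iff' ha n x.1).mp x.2)
  have hy := Classical.choose_spec ((mem_pow_iff' ha n y.1).mp y.2)
  rw [grMk_eq_iff]
  apply keyW ha hb hJtor Φ f hf
  rw [hx, hy]
  exact hxy'

/-- Characterization of `gAux` on any representative. -/
lemma gAux_spec (ha : I = Ideal.span {a}) (hb : J = Ideal.span {b})
    (hJtor : ∀ b' ∈ J, ∀ y ∈ Itor J B, b' * y = 0)
    (Φ : A ⧸ I →+* B ⧸ J) (f : ↥(Itor I A) → ↥(Itor J B)) (hf : IsTorsionHom I J Φ f)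
    (n : ℕ) {x : A} (hx : x ∈ I ^ n) (t : A) (u : B)
    (ht : a ^ n * t - x ∈ I ^ (n + 1))
    (hu : Ideal.Quotient.mk J u = Φ (Ideal.Quotient.mk I t))
    (hu' : b ^ n * u ∈ J ^ n) :
    gAux ha hb hJtor Φ f hf n (grMk I n x hx) = grMk J n (b ^ n * u) hu' := by
  have hdef : gAux ha hb hJtor Φ f hf n (grMk I n x hx) =
      grMk J n (b ^ n *
          Lft I J Φ (Classical.choose ((mem_pow_iff' ha n x).mp hx)))
        (Ideal.mul_mem_right _ _ (gen_pow_mem hb n)) := rfl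
  rw [hdef, grMk_eq_iff]
  set t₀ := Classical.choose ((mem_pow_iff' ha n x).mp hx) with ht₀
  have hx0 : a ^ n * t₀ = x := Classical.choose_spec ((mem_pow_iff' ha n x).mp hx)
  have hW : b ^ n * Lft I J Φ t₀ - b ^ n * Lft I J Φ t ∈ J ^ (n + 1) := by
    apply keyW ha hb hJtor Φ f hf
    rw [hx0]
    have : a ^ n * t - x ∈ I ^ (n + 1) := ht
    have := (I ^ (n + 1)).neg_mem this
    simpa [neg_sub] using this
  have hC : b ^ n * Lft I J Φ t - b ^ n * u ∈ J ^ (n + 1) := by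
    rw [← mul_sub]
    exact mul_mem_pow_add (gen_pow_mem hb n) (mem_pow_one (Lft_sub_mem I J Φ hu))
  have : b ^ n * Lft I J Φ t₀ - b ^ n * u =
      (b ^ n * Lft I J Φ t₀ - b ^ n * Lft I J Φ t) + (b ^ n * Lft I J Φ t - b ^ n * u) := by
    ring
  rw [this]
  exact add_mem hW hC

lemma grMk_add (I : Ideal A) (n : ℕ) {x y : A} (hx : x ∈ I ^ n) (hy : y ∈ I ^ n) :
    grMk I n (x + y) (add_mem hx hy) = grMk I n x hx + grMk I n y hy := by
  rw [grMk, grMk, grMk, ← Submodule.Quotient.mk_add]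
  rfl

end MyAux

/-- **Lemma 2.3, (1) ⇒ (2).** -/
theorem stmt3 {A B : Type*} [CommRing A] [CommRing B] (I : Ideal A) (J : Ideal B)
    (hIp : I.IsPrincipal) (hJp : J.IsPrincipal)
    (hItor : ∀ a ∈ I, ∀ x ∈ Itor I A, a * x = 0)
    (hJtor : ∀ b ∈ J, ∀ y ∈ Itor J B, b * y = 0)
    (Φ : A ⧸ I →+* B ⧸ J)
    (f : ↥(Itor I A) → ↥(Itor J B))
    (hf : IsTorsionHom I J Φ f) :
    ∃ g : ∀ n, GrPiece I n →+ GrPiece J n, IsGradedHom I J Φ g := by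
  obtain ⟨a, ha0⟩ := hIp.principal
  obtain ⟨b, hb0⟩ := hJp.principal
  have ha : I = Ideal.span {a} := ha0
  have hb : J = Ideal.span {b} := hb0
  clear ha0 hb0
  -- additivity of the raw map
  have hadd : ∀ n (p q : GrPiece I n),
      gAux ha hb hJtor Φ f hf n (p + q) =
        gAux ha hb hJtor Φ f hf n p + gAux ha hb hJtor Φ f hf n q := by
    intro n p q
    refine Quotient.inductionOn₂ p q ?_
    rintro ⟨x, hx⟩ ⟨y, hy⟩
    show gAux ha hb hJtor Φ f hf n (grMk I n x hx + grMk I n y hy) =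
      gAux ha hb hJtor Φ f hf n (grMk I n x hx) + gAux ha hb hJtor Φ f hf n (grMk I n y hy)
    obtain ⟨tx, htx⟩ := (mem_pow_iff' ha n x).mp hx
    obtain ⟨ty, hty⟩ := (mem_pow_iff' ha n y).mp hy
    have hbn : b ^ n ∈ J ^ n := gen_pow_mem hb n
    have h1 : gAux ha hb hJtor Φ f hf n (grMk I n x hx) =
        grMk J n (b ^ n * Lft I J Φ tx) (Ideal.mul_mem_right _ _ hbn) :=
      gAux_spec ha hb hJtor Φ f hf n hx tx (Lft I J Φ tx)
        (by rw [htx, sub_self]; exact zero_mem _) (mk_Lft I J Φ tx) _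
    have h2 : gAux ha hb hJtor Φ f hf n (grMk I n y hy) =
        grMk J n (b ^ n * Lft I J Φ ty) (Ideal.mul_mem_right _ _ hbn) :=
      gAux_spec ha hb hJtor Φ f hf n hy ty (Lft I J Φ ty)
        (by rw [hty, sub_self]; exact zero_mem _) (mk_Lft I J Φ ty) _
    have hgm : grMk I n x hx + grMk I n y hy = grMk I n (x + y) (add_mem hx hy) :=
      (grMk_add I n hx hy).symm
    have h3 : gAux ha hb hJtor Φ f hf n (grMk I n (x + y) (add_mem hx hy)) =
        grMk J n (b ^ n * (Lft I J Φ tx + Lft I J Φ ty))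
          (Ideal.mul_mem_right _ _ hbn) := by
      refine gAux_spec ha hb hJtor Φ f hf n (add_mem hx hy) (tx + ty) (Lft I J Φ tx + Lft I J Φ ty) ?_ ?_ _
      · rw [mul_add, htx, hty, sub_self]; exact zero_mem _
      · rw [map_add, map_add, map_add, mk_Lft, mk_Lft]
    rw [hgm, h3, h1, h2,
      ← grMk_add J n (Ideal.mul_mem_right _ _ hbn) (Ideal.mul_mem_right _ _ hbn),
      grMk_eq_iff, mul_add, sub_self]
    exact zero_mem _
  refine ⟨fun n => AddMonoidHom.mk' (gAux ha hb hJtor Φ f hf n) (hadd n), ?_, ?_⟩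
  · -- degree 0 component is Φ
    intro x u hxu
    show gAux ha hb hJtor Φ f hf 0 (grMk I 0 x (mem_pow_zero I x)) =
      grMk J 0 u (mem_pow_zero J u)
    have hu' : b ^ 0 * u ∈ J ^ 0 := mem_pow_zero J _
    have h1 : gAux ha hb hJtor Φ f hf 0 (grMk I 0 x (mem_pow_zero I x)) =
        grMk J 0 (b ^ 0 * u) hu' :=
      gAux_spec ha hb hJtor Φ f hf 0 (mem_pow_zero I x) x u
        (by rw [pow_zero, one_mul, sub_self]; exact zero_mem _) hxu.symm _
    rw [h1, grMk_eq_iff]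
    rw [pow_zero, one_mul, sub_self]
    exact zero_mem _
  · -- multiplicativity
    intro m n x y hx hy u v hu hv hgx hgy
    obtain ⟨tx, htx⟩ := (mem_pow_iff' ha m x).mp hx
    obtain ⟨ty, hty⟩ := (mem_pow_iff' ha n y).mp hy
    have hbm : b ^ m ∈ J ^ m := gen_pow_mem hb m
    have hbn : b ^ n ∈ J ^ n := gen_pow_mem hb n
    have h1 : gAux ha hb hJtor Φ f hf m (grMk I m x hx) =
        grMk J m (b ^ m * Lft I J Φ tx) (Ideal.mul_mem_right _ _ hbm) :=
      gAux_spec ha hb hJtor Φ f hf m hx tx (Lft I J Φ tx)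
        (by rw [htx, sub_self]; exact zero_mem _) (mk_Lft I J Φ tx) _
    have h2 : gAux ha hb hJtor Φ f hf n (grMk I n y hy) =
        grMk J n (b ^ n * Lft I J Φ ty) (Ideal.mul_mem_right _ _ hbn) :=
      gAux_spec ha hb hJtor Φ f hf n hy ty (Lft I J Φ ty)
        (by rw [hty, sub_self]; exact zero_mem _) (mk_Lft I J Φ ty) _
    have hgx' : gAux ha hb hJtor Φ f hf m (grMk I m x hx) = grMk J m u hu := hgx
    have hgy' : gAux ha hb hJtor Φ f hf n (grMk I n y hy) = grMk J n v hv := hgy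
    have hum : b ^ m * Lft I J Φ tx - u ∈ J ^ (m + 1) := by
      rw [← grMk_eq_iff J m (Ideal.mul_mem_right _ _ hbm) hu, ← h1]
      exact hgx'
    have hvn : b ^ n * Lft I J Φ ty - v ∈ J ^ (n + 1) := by
      rw [← grMk_eq_iff J n (Ideal.mul_mem_right _ _ hbn) hv, ← h2]
      exact hgy'
    show gAux ha hb hJtor Φ f hf (m + n)
        (grMk I (m + n) (x * y) (mul_mem_pow_add hx hy)) =
      grMk J (m + n) (u * v) (mul_mem_pow_add hu hv)
    have hbmn : b ^ (m + n) ∈ J ^ (m + n) := gen_pow_mem hb (m + n)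
    have h3 : gAux ha hb hJtor Φ f hf (m + n)
        (grMk I (m + n) (x * y) (mul_mem_pow_add hx hy)) =
        grMk J (m + n) (b ^ (m + n) * (Lft I J Φ tx * Lft I J Φ ty))
          (Ideal.mul_mem_right _ _ hbmn) := by
      refine gAux_spec ha hb hJtor Φ f hf (m + n) (mul_mem_pow_add hx hy) (tx * ty) (Lft I J Φ tx * Lft I J Φ ty) ?_ ?_ _
      · have : a ^ (m + n) * (tx * ty) = x * y := by
          rw [← htx, ← hty]; ring
        rw [this, sub_self]; exact zero_mem _
      · rw [map_mul, map_mul, mk_Lft, mk_Lft, map_mul]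
    rw [h3, grMk_eq_iff]
    have key : b ^ (m + n) * (Lft I J Φ tx * Lft I J Φ ty) - u * v =
        (b ^ m * Lft I J Φ tx - u) * (b ^ n * Lft I J Φ ty) +
          u * (b ^ n * Lft I J Φ ty - v) := by ring
    rw [key]
    have t1 : (b ^ m * Lft I J Φ tx - u) * (b ^ n * Lft I J Φ ty) ∈ J ^ (m + 1 + n) :=
      mul_mem_pow_add hum (Ideal.mul_mem_right _ _ hbn)
    have t2 : u * (b ^ n * Lft I J Φ ty - v) ∈ J ^ (m + (n + 1)) :=
      mul_mem_pow_add hu hvn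
    have e1 : m + 1 + n = m + n + 1 := by omega
    have e2 : m + (n + 1) = m + n + 1 := by omega
    rw [e1] at t1
    rw [e2] at t2
    exact add_mem t1 t2
end

section
/- Let (A, I) and (B, J) be pairs of a commutative ring and a principal ideal such that I·A_{I-tor} = 0 and J·B_{J-tor} = 0, and let Φ : A/I → B/J be a ring homomorphism. Suppose Φ extends to a morphism of graded rings Φ• : gr_I(A) → gr_J(B), and suppose there exist generators a of I and b of J such that Φ¹(a mod I²) = b mod J². Then there exists a homomorphism of (possibly non-unital) rings Φ_tor : A_{I-tor} → B_{J-tor} such that Φ ∘ φ_{I,A} = φ_{J,B} ∘ Φ_tor. -/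
open Submodule

section MyAux

variable {B : Type*} [CommRing B]

lemma my_mem_Itor_of_pow_gen {J : Ideal B} {b : B} (hb : J = Ideal.span {b}) {y : B} (n : ℕ)
    (h : b ^ n * y = 0) : y ∈ Itor J B := by
  intro c hc
  rw [hb, Ideal.mem_span_singleton] at hc
  obtain ⟨s, rfl⟩ := hc
  refine ⟨n, ?_⟩
  have : (b * s) ^ n * y = s ^ n * (b ^ n * y) := by ring
  simp only [smul_eq_mul, this, h, mul_zero]

lemma my_eq_zero_of_mem {J : Ideal B} {b : B} (hb : J = Ideal.span {b})
    (hJtor : ∀ b ∈ J, ∀ y ∈ Itor J B, b * y = 0)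
    {z : B} (hz : z ∈ Itor J B) (hzJ : z ∈ J) : z = 0 := by
  rw [hb, Ideal.mem_span_singleton] at hzJ
  obtain ⟨r, rfl⟩ := hzJ
  have h1 : b * (b * r) = 0 := hJtor b (gen_mem hb) _ hz
  have h2 : b ^ 2 * r = 0 := by rw [← h1]; ring
  have hr : r ∈ Itor J B := my_mem_Itor_of_pow_gen hb 2 h2
  exact hJtor b (gen_mem hb) r hr

end MyAux

/-- **Lemma 2.3, (2) + (∗) ⇒ (1).** -/
theorem stmt4 {A B : Type*} [CommRing A] [CommRing B] (I : Ideal A) (J : Ideal B)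
    (hIp : I.IsPrincipal) (hJp : J.IsPrincipal)
    (hItor : ∀ a ∈ I, ∀ x ∈ Itor I A, a * x = 0)
    (hJtor : ∀ b ∈ J, ∀ y ∈ Itor J B, b * y = 0)
    (Φ : A ⧸ I →+* B ⧸ J)
    (g : ∀ n, GrPiece I n →+ GrPiece J n)
    (hg : IsGradedHom I J Φ g)
    (a : A) (ha : I = Ideal.span {a}) (b : B) (hb : J = Ideal.span {b})
    (hab : g 1 (grMk I 1 a (gen_mem_pow_one ha)) = grMk J 1 b (gen_mem_pow_one hb)) :
    ∃ f : Itor I A → Itor J B, IsTorsionHom I J Φ f := by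
  -- Existence of a torsion lift for each x
  have key : ∀ x : Itor I A, ∃ y : Itor J B,
      Φ (Ideal.Quotient.mk I x.1) = Ideal.Quotient.mk J y.1 := by
    rintro ⟨x, hx⟩
    obtain ⟨u, hu⟩ := Ideal.Quotient.mk_surjective (Φ (Ideal.Quotient.mk I x))
    have h0 : g 0 (grMk I 0 x (mem_pow_zero I x)) = grMk J 0 u (mem_pow_zero J u) :=
      hg.1 x u hu.symm
    have hmul := hg.2 0 1 x a (mem_pow_zero I x) (gen_mem_pow_one ha) u b
      (mem_pow_zero J u) (gen_mem_pow_one hb) h0 hab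
    have hxa : x * a = 0 := by rw [mul_comm]; exact hItor a (gen_mem ha) x hx
    have hz : grMk I 1 (x * a) (mul_mem_pow_add (mem_pow_zero I x) (gen_mem_pow_one ha))
        = grMk I 1 0 (zero_mem _) := by
      rw [grMk_eq_iff]
      simp [hxa]
    have hz0 : grMk I 1 (0 : A) (zero_mem _) = 0 := by
      show Submodule.Quotient.mk _ = 0
      rw [Submodule.Quotient.mk_eq_zero]
      simp
    have hJ0 : grMk J 1 (0 : B) (zero_mem _) = 0 := by
      show Submodule.Quotient.mk _ = 0
      rw [Submodule.Quotient.mk_eq_zero]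
      simp
    have hub : grMk J 1 (u * b) (mul_mem_pow_add (mem_pow_zero J u) (gen_mem_pow_one hb))
        = grMk J 1 0 (zero_mem _) := by
      rw [← hmul, hz, hz0, hJ0, map_zero]
    rw [grMk_eq_iff] at hub
    rw [sub_zero] at hub
    have hub2 : u * b ∈ Ideal.span {b ^ 2} := by
      rwa [hb, Ideal.span_singleton_pow, show (1:ℕ)+1 = 2 from rfl] at hub
    rw [Ideal.mem_span_singleton] at hub2
    obtain ⟨c, hc⟩ := hub2
    refine ⟨⟨u - b * c, ?_⟩, ?_⟩
    · refine my_mem_Itor_of_pow_gen hb 1 ?_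
      rw [pow_one]
      calc b * (u - b * c) = u * b - b ^ 2 * c := by ring
        _ = 0 := by rw [hc]; ring
    · rw [← hu, Ideal.Quotient.eq]
      have : u - (u - b * c) = b * c := by ring
      rw [this, hb]
      exact Ideal.mul_mem_right _ _ (Ideal.mem_span_singleton_self b)
  choose f hf using key
  -- uniqueness: elements of Itor J B are determined by their class mod J
  have uniq : ∀ y z : Itor J B,
      Ideal.Quotient.mk J y.1 = Ideal.Quotient.mk J z.1 → y = z := by
    rintro ⟨y, hy⟩ ⟨z, hz⟩ h
    rw [Ideal.Quotient.eq] at h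
    have hmem : y - z ∈ Itor J B := sub_mem hy hz
    have := my_eq_zero_of_mem hb hJtor hmem h
    ext
    exact sub_eq_zero.mp this
  refine ⟨f, ?_, ?_, hf⟩
  · intro x y
    refine uniq _ _ ?_
    rw [← hf (x + y)]
    have : Ideal.Quotient.mk J ((f x + f y) : Itor J B).1
        = Ideal.Quotient.mk J (f x).1 + Ideal.Quotient.mk J (f y).1 := by
      simp [Submodule.coe_add]
    rw [this, ← hf x, ← hf y]
    show Φ (Ideal.Quotient.mk I ((x : A) + (y : A))) = _
    rw [map_add, map_add]
  · intro x y
    refine uniq _ _ ?_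
    rw [← hf ⟨x.1 * y.1, mul_mem_Itor y.2⟩]
    show Φ (Ideal.Quotient.mk I (x.1 * y.1)) = Ideal.Quotient.mk J ((f x).1 * (f y).1)
    rw [map_mul, map_mul, hf x, hf y, ← map_mul]
end

section
/- Let (A, I) and (B, J) be pairs of a commutative ring and a principal ideal such that I·A_{I-tor} = 0 and J·B_{J-tor} = 0, let Φ : A/I → B/J be a ring isomorphism, and suppose there exist generators a of I and b of J such that some graded extension in degree 1 sends a mod I² to b mod J². Then the following are equivalent: (1) there exists an isomorphism of (possibly non-unital) rings Φ_tor : A_{I-tor} → B_{J-tor} such that Φ ∘ φ_{I,A} = φ_{J,B} ∘ Φ_tor; (2) Φ extends to an isomorphism of graded rings Φ• : gr_I(A) → gr_J(B) with Φ¹(a mod I²) = b mod J². -/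
open Submodule

section MyAux

variable {A B : Type*} [CommRing A] [CommRing B]

lemma my_grMk_congr (I : Ideal A) (n : ℕ) {x y : A} (h : x = y) (hx : x ∈ I ^ n)
    (hy : y ∈ I ^ n) : grMk I n x hx = grMk I n y hy := by subst h; rfl

lemma my_grMk_zero_iff (I : Ideal A) (n : ℕ) {x : A} (hx : x ∈ I ^ n) :
    grMk I n x hx = 0 ↔ x ∈ I ^ (n + 1) :=
  Submodule.Quotient.mk_eq_zero _

lemma my_rep {I : Ideal A} {a : A} (ha : I = Ideal.span {a}) {n : ℕ} {x : A} (hx : x ∈ I ^ n) :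
    ∃ r, x = r * a ^ n := by
  rw [ha, Ideal.span_singleton_pow, Ideal.mem_span_singleton'] at hx
  obtain ⟨r, hr⟩ := hx
  exact ⟨r, hr.symm⟩

lemma my_tor_of_pow {I : Ideal A} {a : A} (ha : I = Ideal.span {a}) (n : ℕ) {x : A}
    (h : a ^ (n + 1) * x = 0) : x ∈ Itor I A := by
  intro c hc
  rw [ha, Ideal.mem_span_singleton'] at hc
  obtain ⟨r, rfl⟩ := hc
  exact ⟨n + 1, by rw [smul_eq_mul, mul_pow, mul_assoc, h, mul_zero]⟩

lemma my_mk_inj {I : Ideal A} {a : A} (ha : I = Ideal.span {a})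
    (hItor : ∀ c ∈ I, ∀ x ∈ Itor I A, c * x = 0)
    {x y : A} (hx : x ∈ Itor I A) (hy : y ∈ Itor I A)
    (h : Ideal.Quotient.mk I x = Ideal.Quotient.mk I y) : x = y := by
  have hd : x - y ∈ I := Ideal.Quotient.eq.mp h
  rw [ha, Ideal.mem_span_singleton'] at hd
  obtain ⟨r, hr⟩ := hd
  have h1 : a * (x - y) = 0 := hItor a (gen_mem ha) _ (sub_mem hx hy)
  have h2 : a ^ (1 + 1) * r = 0 := by
    have he : a ^ (1 + 1) * r = a * (r * a) := by ring
    rw [he, hr, h1]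
  have h4 : a * r = 0 := hItor a (gen_mem ha) r (my_tor_of_pow ha 1 h2)
  have h5 : x - y = 0 := by
    rw [← hr, mul_comm]
    exact h4
  exact sub_eq_zero.mp h5

lemma my_g_pow {I : Ideal A} {J : Ideal B} {Φ : A ⧸ I →+* B ⧸ J}
    {g : ∀ n, GrPiece I n →+ GrPiece J n} {a : A} {b : B}
    (hg : IsGradedHom I J Φ g) (ha : I = Ideal.span {a}) (hb : J = Ideal.span {b})
    (h1 : g 1 (grMk I 1 a (gen_mem_pow_one ha)) = grMk J 1 b (gen_mem_pow_one hb)) :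
    ∀ n, g n (grMk I n (a ^ n) (Ideal.pow_mem_pow (gen_mem ha) n)) =
      grMk J n (b ^ n) (Ideal.pow_mem_pow (gen_mem hb) n) := by
  intro n
  induction n with
  | zero =>
      have h0 := hg.1 1 1 (by simp)
      rw [my_grMk_congr I 0 (pow_zero a) _ (mem_pow_zero I 1),
          my_grMk_congr J 0 (pow_zero b) _ (mem_pow_zero J 1)]
      exact h0
  | succ n ih =>
      have h2 := hg.2 n 1 (a ^ n) a (Ideal.pow_mem_pow (gen_mem ha) n) (gen_mem_pow_one ha)
        (b ^ n) b (Ideal.pow_mem_pow (gen_mem hb) n) (gen_mem_pow_one hb) ih h1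
      rw [my_grMk_congr I (n + 1) (pow_succ a n) _
            (mul_mem_pow_add (Ideal.pow_mem_pow (gen_mem ha) n) (gen_mem_pow_one ha)),
          my_grMk_congr J (n + 1) (pow_succ b n) _
            (mul_mem_pow_add (Ideal.pow_mem_pow (gen_mem hb) n) (gen_mem_pow_one hb))]
      exact h2

lemma my_g_det {I : Ideal A} {J : Ideal B} {Φ : A ⧸ I →+* B ⧸ J}
    {g : ∀ n, GrPiece I n →+ GrPiece J n} {a : A} {b : B}
    (hg : IsGradedHom I J Φ g) (ha : I = Ideal.span {a}) (hb : J = Ideal.span {b})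
    (h1 : g 1 (grMk I 1 a (gen_mem_pow_one ha)) = grMk J 1 b (gen_mem_pow_one hb))
    (n : ℕ) (x : A) (u : B)
    (hxu : Φ (Ideal.Quotient.mk I x) = Ideal.Quotient.mk J u) :
    g n (grMk I n (a ^ n * x) (Ideal.mul_mem_right x _ (Ideal.pow_mem_pow (gen_mem ha) n))) =
      grMk J n (b ^ n * u) (Ideal.mul_mem_right u _ (Ideal.pow_mem_pow (gen_mem hb) n)) := by
  have h0 := hg.1 x u hxu
  have h2 := hg.2 n 0 (a ^ n) x (Ideal.pow_mem_pow (gen_mem ha) n) (mem_pow_zero I x)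
    (b ^ n) u (Ideal.pow_mem_pow (gen_mem hb) n) (mem_pow_zero J u)
    (my_g_pow hg ha hb h1 n) h0
  exact h2

end MyAux
/-- **Remark 2.4 (b).** If `Φ` is an isomorphism and some graded extension sends
`a mod I²` to `b mod J²` for generators `a`, `b`, then a bijective torsion map exists
iff `Φ` extends to an isomorphism of graded rings sending `a mod I²` to `b mod J²`. -/
theorem stmt6 {A B : Type*} [CommRing A] [CommRing B] (I : Ideal A) (J : Ideal B)
    (hIp : I.IsPrincipal) (hJp : J.IsPrincipal)
    (hItor : ∀ a ∈ I, ∀ x ∈ Itor I A, a * x = 0)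
    (hJtor : ∀ b ∈ J, ∀ y ∈ Itor J B, b * y = 0)
    (Φ : A ⧸ I →+* B ⧸ J) (hΦ : Function.Bijective Φ)
    (a : A) (ha : I = Ideal.span {a}) (b : B) (hb : J = Ideal.span {b})
    (hext : ∃ g : ∀ n, GrPiece I n →+ GrPiece J n, IsGradedHom I J Φ g ∧
      g 1 (grMk I 1 a (gen_mem_pow_one ha)) = grMk J 1 b (gen_mem_pow_one hb)) :
    (∃ f : Itor I A → Itor J B, IsTorsionHom I J Φ f ∧ Function.Bijective f) ↔
      (∃ g : ∀ n, GrPiece I n →+ GrPiece J n, IsGradedHom I J Φ g ∧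
        (∀ n, Function.Bijective (g n)) ∧
        g 1 (grMk I 1 a (gen_mem_pow_one ha)) = grMk J 1 b (gen_mem_pow_one hb)) := by
  have haI : a ∈ I := gen_mem ha
  have hbJ : b ∈ J := gen_mem hb
  constructor
  · rintro ⟨f, ⟨hfadd, hfmul, hfcomp⟩, hfinj, hfsurj⟩
    obtain ⟨g, hg, hg1⟩ := hext
    refine ⟨g, hg, fun n => ⟨?_, ?_⟩, hg1⟩
    · -- injectivity of g n
      rw [injective_iff_map_eq_zero]
      intro z hz
      obtain ⟨⟨w, hw⟩, rfl⟩ := Submodule.Quotient.mk_surjective _ z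
      obtain ⟨x₀, hx₀⟩ := my_rep ha hw
      obtain ⟨u₀, hu₀⟩ := Ideal.Quotient.mk_surjective (Φ (Ideal.Quotient.mk I x₀))
      have heq : grMk I n w hw = grMk I n (a ^ n * x₀)
          (Ideal.mul_mem_right x₀ _ (Ideal.pow_mem_pow (gen_mem ha) n)) :=
        my_grMk_congr I n (by rw [hx₀, mul_comm]) hw _
      have hz' : grMk J n (b ^ n * u₀)
          (Ideal.mul_mem_right u₀ _ (Ideal.pow_mem_pow (gen_mem hb) n)) = 0 := by
        rw [← my_g_det hg ha hb hg1 n x₀ u₀ hu₀.symm, ← heq]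
        exact hz
      rw [my_grMk_zero_iff] at hz'
      show grMk I n w hw = 0
      rw [my_grMk_zero_iff]
      cases n with
      | zero =>
          have huJ : u₀ ∈ J := by
            have he : b ^ 0 * u₀ = u₀ := by ring
            rw [he, zero_add, pow_one] at hz'
            exact hz'
          have hΦ0 : Φ (Ideal.Quotient.mk I x₀) = 0 := by
            rw [← hu₀]
            exact Ideal.Quotient.eq_zero_iff_mem.mpr huJ
          have hx₀I : x₀ ∈ I := by
            apply Ideal.Quotient.eq_zero_iff_mem.mp
            apply hΦ.1
            rw [hΦ0, map_zero]
          rw [zero_add, pow_one, hx₀, pow_zero, mul_one]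
          exact hx₀I
      | succ m =>
          obtain ⟨s, hs⟩ := my_rep hb hz'
          have hkill : b ^ (m + 1) * (u₀ - s * b) = 0 := by
            have he : b ^ (m + 1) * (u₀ - s * b) = b ^ (m + 1) * u₀ - s * b ^ (m + 1 + 1) := by
              ring
            rw [he, hs, sub_self]
          have htor : u₀ - s * b ∈ Itor J B := my_tor_of_pow hb m hkill
          obtain ⟨t, ht⟩ := hfsurj ⟨u₀ - s * b, htor⟩
          have hcomp := hfcomp t
          rw [ht] at hcomp
          have hmku : Ideal.Quotient.mk J (u₀ - s * b) = Ideal.Quotient.mk J u₀ := by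
            rw [Ideal.Quotient.eq]
            have he : u₀ - s * b - u₀ = -(s * b) := by ring
            rw [he]
            exact neg_mem (Ideal.mul_mem_left _ _ hbJ)
          have hΦeq : Φ (Ideal.Quotient.mk I t.1) = Φ (Ideal.Quotient.mk I x₀) := by
            rw [hcomp, hmku, hu₀]
          have hdI : t.1 - x₀ ∈ I := Ideal.Quotient.eq.mp (hΦ.1 hΦeq)
          have hdI2 : (t : A) - x₀ ∈ Ideal.span {a} := by rw [← ha]; exact hdI
          obtain ⟨r, hr⟩ := Ideal.mem_span_singleton'.mp hdI2
          have hta : a * t.1 = 0 := hItor a haI t.1 t.2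
          have hw2 : w = -r * a ^ (m + 1 + 1) := by
            have hx₀' : x₀ = t.1 - r * a := by rw [hr]; ring
            have hz0 : t.1 * a ^ (m + 1) = 0 := by
              have he : t.1 * a ^ (m + 1) = a * t.1 * a ^ m := by ring
              rw [he, hta, zero_mul]
            rw [hx₀, hx₀']
            have he : (t.1 - r * a) * a ^ (m + 1) =
                t.1 * a ^ (m + 1) + -r * a ^ (m + 1 + 1) := by ring
            rw [he, hz0, zero_add]
          rw [hw2]
          exact Ideal.mul_mem_left _ _ (Ideal.pow_mem_pow haI _)
    · -- surjectivity of g n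
      intro z
      obtain ⟨⟨v, hv⟩, rfl⟩ := Submodule.Quotient.mk_surjective _ z
      obtain ⟨u₀, hu₀⟩ := my_rep hb hv
      obtain ⟨xq, hxq⟩ := hΦ.2 (Ideal.Quotient.mk J u₀)
      obtain ⟨x₀, rfl⟩ := Ideal.Quotient.mk_surjective xq
      refine ⟨grMk I n (a ^ n * x₀)
        (Ideal.mul_mem_right x₀ _ (Ideal.pow_mem_pow (gen_mem ha) n)), ?_⟩
      rw [my_g_det hg ha hb hg1 n x₀ u₀ hxq]
      exact my_grMk_congr J n (by rw [hu₀, mul_comm]) _ hv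
  · rintro ⟨g, hg, hgbij, hg1⟩
    have hAtoB : ∀ x ∈ Itor I A, ∃ u ∈ Itor J B,
        Φ (Ideal.Quotient.mk I x) = Ideal.Quotient.mk J u := by
      intro x hx
      obtain ⟨u₀, hu₀⟩ := Ideal.Quotient.mk_surjective (Φ (Ideal.Quotient.mk I x))
      have hdet := my_g_det hg ha hb hg1 1 x u₀ hu₀.symm
      have hax : a ^ 1 * x = 0 := by
        rw [pow_one]
        exact hItor a haI x hx
      have hL : grMk I 1 (a ^ 1 * x)
          (Ideal.mul_mem_right x _ (Ideal.pow_mem_pow (gen_mem ha) 1)) = 0 := by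
        rw [my_grMk_zero_iff, hax]
        exact zero_mem _
      rw [hL, map_zero] at hdet
      have hmem : b ^ 1 * u₀ ∈ J ^ (1 + 1) := by
        rw [← my_grMk_zero_iff J 1 (Ideal.mul_mem_right u₀ _ (Ideal.pow_mem_pow (gen_mem hb) 1))]
        exact hdet.symm
      obtain ⟨s, hs⟩ := my_rep hb hmem
      have hkill : b ^ (0 + 1) * (u₀ - s * b) = 0 := by
        have he : b ^ (0 + 1) * (u₀ - s * b) = b ^ 1 * u₀ - s * b ^ (1 + 1) := by ring
        rw [he, hs, sub_self]
      refine ⟨u₀ - s * b, my_tor_of_pow hb 0 hkill, ?_⟩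
      rw [← hu₀, Ideal.Quotient.eq]
      have he : u₀ - (u₀ - s * b) = s * b := by ring
      rw [he]
      exact Ideal.mul_mem_left _ _ hbJ
    have hBtoA : ∀ u ∈ Itor J B, ∃ x ∈ Itor I A,
        Φ (Ideal.Quotient.mk I x) = Ideal.Quotient.mk J u := by
      intro u hu
      obtain ⟨xq, hxq⟩ := hΦ.2 (Ideal.Quotient.mk J u)
      obtain ⟨x₀, rfl⟩ := Ideal.Quotient.mk_surjective xq
      have hdet := my_g_det hg ha hb hg1 1 x₀ u hxq
      have hbu : b ^ 1 * u = 0 := by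
        rw [pow_one]
        exact hJtor b hbJ u hu
      have hR : grMk J 1 (b ^ 1 * u)
          (Ideal.mul_mem_right u _ (Ideal.pow_mem_pow (gen_mem hb) 1)) = 0 := by
        rw [my_grMk_zero_iff, hbu]
        exact zero_mem _
      rw [hR] at hdet
      have h0 := (injective_iff_map_eq_zero (g 1)).mp (hgbij 1).1 _ hdet
      rw [my_grMk_zero_iff] at h0
      obtain ⟨r, hr⟩ := my_rep ha h0
      have hkill : a ^ (0 + 1) * (x₀ - r * a) = 0 := by
        have he : a ^ (0 + 1) * (x₀ - r * a) = a ^ 1 * x₀ - r * a ^ (1 + 1) := by ring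
        rw [he, hr, sub_self]
      refine ⟨x₀ - r * a, my_tor_of_pow ha 0 hkill, ?_⟩
      rw [← hxq]
      apply congrArg Φ
      rw [Ideal.Quotient.eq]
      have he : x₀ - r * a - x₀ = -(r * a) := by ring
      rw [he]
      exact neg_mem (Ideal.mul_mem_left _ _ haI)
    choose F hFtor hFeq using hAtoB
    have huniq : ∀ (x : Itor I A) (u : B), u ∈ Itor J B →
        Φ (Ideal.Quotient.mk I x.1) = Ideal.Quotient.mk J u → F x.1 x.2 = u := by
      intro x u hu h
      apply my_mk_inj hb hJtor (hFtor x.1 x.2) hu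
      rw [← hFeq x.1 x.2]
      exact h
    refine ⟨fun x => ⟨F x.1 x.2, hFtor x.1 x.2⟩, ⟨?_, ?_, ?_⟩, ?_, ?_⟩
    · intro x y
      apply Subtype.ext
      apply huniq
      · exact add_mem (hFtor x.1 x.2) (hFtor y.1 y.2)
      · show Φ (Ideal.Quotient.mk I (x.1 + y.1)) =
          Ideal.Quotient.mk J (F x.1 x.2 + F y.1 y.2)
        rw [map_add, map_add, map_add, hFeq x.1 x.2, hFeq y.1 y.2]
    · intro x y
      apply Subtype.ext
      apply huniq
      · exact mul_mem_Itor (hFtor y.1 y.2)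
      · show Φ (Ideal.Quotient.mk I (x.1 * y.1)) =
          Ideal.Quotient.mk J (F x.1 x.2 * F y.1 y.2)
        rw [map_mul, map_mul, map_mul, hFeq x.1 x.2, hFeq y.1 y.2]
    · intro x
      exact hFeq x.1 x.2
    · intro x y h
      apply Subtype.ext
      apply my_mk_inj ha hItor x.2 y.2
      apply hΦ.1
      rw [hFeq x.1 x.2, hFeq y.1 y.2]
      exact congrArg (fun z : Itor J B => Ideal.Quotient.mk J z.1) h
    · intro u
      obtain ⟨x, hx, hxu⟩ := hBtoA u.1 u.2
      exact ⟨⟨x, hx⟩, Subtype.ext (huniq ⟨x, hx⟩ u.1 u.2 hxu)⟩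
end

section
/- Let R = {R_i, t_i}_{i≥0} be a preperfectoid tower arising from a pair (R, I_0). Then for every i ≥ 0, the homomorphism of graded rings gr_{I_0}(t_i) : gr_{I_0}(R_i) → gr_{I_0}(R_{i+1}) induced by the transition map t_i is injective. -/
open Submodule

section Preamble

variable {A : Type*} [CommRing A]

/-- Multiplicativity of a family of maps between graded pieces: `g` respects the
multiplication of the conormal cones. -/
def GradedMul {A : Type*} [CommRing A] {B : Type*} [CommRing B] (I : Ideal A) (J : Ideal B)
    (g : ∀ n, GrPiece I n →+ GrPiece J n) : Prop :=
  ∀ (m n : ℕ) (x y : A) (hx : x ∈ I ^ m) (hy : y ∈ I ^ n) (u v : B) (hu : u ∈ J ^ m)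
    (hv : v ∈ J ^ n),
    g m (grMk I m x hx) = grMk J m u hu →
    g n (grMk I n y hy) = grMk J n v hv →
    g (m + n) (grMk I (m + n) (x * y) (mul_mem_pow_add hx hy)) =
      grMk J (m + n) (u * v) (mul_mem_pow_add hu hv)

section Tower

universe u

variable (R : ℕ → Type u) [∀ i, CommRing (R i)] (t : ∀ i, R i →+* R (i + 1))

/-- The composite transition map `R 0 → R i` of a tower. -/
def chain : ∀ i, R 0 →+* R i
  | 0 => RingHom.id (R 0)
  | (i + 1) => (t i).comp (chain i)

/-- The composite transition map `R 1 → R (i+1)` of a tower. -/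
def chain1 : ∀ i, R 1 →+* R (i + 1)
  | 0 => RingHom.id (R 1)
  | (i + 1) => (t (i + 1)).comp (chain1 i)

variable (I0 : Ideal (R 0))

/-- The extension `I₀Rᵢ` of `I₀` to the `i`-th layer. -/
def I0R (i : ℕ) : Ideal (R i) := I0.map (chain R t i)

lemma I0R_succ (i : ℕ) : I0R R t I0 (i + 1) = (I0R R t I0 i).map (t i) := by
  rw [I0R, I0R, Ideal.map_map]; rfl

/-- The induced map `t̄ᵢ : Rᵢ/I₀Rᵢ → Rᵢ₊₁/I₀Rᵢ₊₁`. -/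
def tbar (i : ℕ) : R i ⧸ I0R R t I0 i →+* R (i + 1) ⧸ I0R R t I0 (i + 1) :=
  Ideal.quotientMap _ (t i) (by rw [I0R_succ]; exact Ideal.le_comap_map)

lemma t_pow_mem (i : ℕ) : ∀ n, ∀ x ∈ (I0R R t I0 i) ^ n, t i x ∈ (I0R R t I0 (i + 1)) ^ n := by
  intro n x hx
  have : t i x ∈ Ideal.map (t i) ((I0R R t I0 i) ^ n) := Ideal.mem_map_of_mem _ hx
  rwa [Ideal.map_pow, ← I0R_succ] at this

/-- The extension `I₁Rᵢ₊₁` of a principal ideal `I₁ ⊆ R₁`. -/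
def I1R (I1 : Ideal (R 1)) (i : ℕ) : Ideal (R (i + 1)) := I1.map (chain1 R t i)

variable (p : ℕ)

/-- The torsion-part conditions (g) of a (pre)perfectoid tower, for the `i`-th layer:
`I₀·(Rᵢ)_{I₀-tor} = 0` and existence of a bijection `(Fᵢ)_tor` compatible with `Fᵢ`. -/
def CondG (F : ∀ i, R (i + 1) ⧸ I0R R t I0 (i + 1) →+* R i ⧸ I0R R t I0 i) (i : ℕ) : Prop :=
  (∀ a ∈ I0R R t I0 i, ∀ x ∈ Itor (I0R R t I0 i) (R i), a * x = 0) ∧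
  ∃ Ftor : Itor (I0R R t I0 (i + 1)) (R (i + 1)) → Itor (I0R R t I0 i) (R i),
    Function.Bijective Ftor ∧
    ∀ x, Ideal.Quotient.mk (I0R R t I0 i) (Ftor x).1 =
      F i (Ideal.Quotient.mk (I0R R t I0 (i + 1)) x.1)

/-- The conormal-cone conditions (g') of Theorem 3.8, for the `i`-th layer:
`I₀·(Rᵢ)_{I₀-tor} = 0` and existence of a graded ring isomorphism
`Φᵢ : gr_{I₁}(Rᵢ₊₁) → gr_{I₀}(Rᵢ)` whose degree-0 component, composed with the projection
`Rᵢ₊₁/I₀Rᵢ₊₁ → Rᵢ₊₁/I₁Rᵢ₊₁`, is `Fᵢ`. -/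
def CondG' (F : ∀ i, R (i + 1) ⧸ I0R R t I0 (i + 1) →+* R i ⧸ I0R R t I0 i)
    (I1 : Ideal (R 1)) (i : ℕ) : Prop :=
  (∀ a ∈ I0R R t I0 i, ∀ x ∈ Itor (I0R R t I0 i) (R i), a * x = 0) ∧
  ∃ g : ∀ n, GrPiece (I1R R t I1 i) n →+ GrPiece (I0R R t I0 i) n,
    (∀ n, Function.Bijective (g n)) ∧
    GradedMul (I1R R t I1 i) (I0R R t I0 i) g ∧
    ∀ (x : R (i + 1)) (u : R i),
      Ideal.Quotient.mk (I0R R t I0 i) u = F i (Ideal.Quotient.mk (I0R R t I0 (i + 1)) x) →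
      g 0 (grMk (I1R R t I1 i) 0 x (mem_pow_zero _ x)) =
        grMk (I0R R t I0 i) 0 u (mem_pow_zero _ u)

/-- `R` together with the transition maps `t` is a preperfectoid tower arising from
`(R 0, I0)` (Definition 3.1: conditions (a)–(d), (f), (g)). -/
def IsPreperfectoidTower : Prop :=
  (p : R 0) ∈ I0 ∧
  (∀ i, Function.Injective (tbar R t I0 i)) ∧
  I0.IsPrincipal ∧
  ∃ F : ∀ i, R (i + 1) ⧸ I0R R t I0 (i + 1) →+* R i ⧸ I0R R t I0 i,
    (∀ i x, tbar R t I0 i (F i x) = x ^ p) ∧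
    (∀ i, Function.Surjective (F i)) ∧
    (∃ I1 : Ideal (R 1), I1.IsPrincipal ∧ I1 ^ p = I0R R t I0 1 ∧
      ∀ i, RingHom.ker (F i) =
        I1.map ((Ideal.Quotient.mk (I0R R t I0 (i + 1))).comp (chain1 R t i))) ∧
    (∀ i, CondG R t I0 F i)

end Tower
universe u


section AuxLemmas

/-- If `p • v = 0` then `(-v)^p = -(v^p)` for `p` prime. -/
lemma aux_neg_pow_prime {A : Type*} [CommRing A] {p : ℕ} (hp : p.Prime) (v : A)
    (hv : (p : ℕ) • v = 0) : (-v) ^ p = -(v ^ p) := by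
  rcases hp.eq_two_or_odd' with h2 | hodd
  · subst h2
    have h2v : v + v = 0 := by
      have h := hv
      rw [show (2 : ℕ) = 1 + 1 from rfl, add_smul, one_smul] at h
      exact h
    have hvneg : -v = v := neg_eq_of_add_eq_zero_left h2v
    calc (-v) ^ 2 = v ^ 2 := by rw [hvneg]
    _ = -(v ^ 2) := by
        have hvv : v ^ 2 + v ^ 2 = 0 := by
          calc v ^ 2 + v ^ 2 = (v + v) * v := by ring
          _ = 0 := by rw [h2v, zero_mul]
        exact (neg_eq_of_add_eq_zero_left hvv).symm
  · exact hodd.neg_pow v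

/-- Freshman's dream with a twist: if `p • v = 0` then `(u - v)^p = u^p - v^p`. -/
lemma aux_sub_pow_prime {A : Type*} [CommRing A] {p : ℕ} (hp : p.Prime) (u v : A)
    (hv : (p : ℕ) • v = 0) : (u - v) ^ p = u ^ p - v ^ p := by
  obtain ⟨q, hq⟩ : ∃ q, p = q + 1 := ⟨p - 1, by have := hp.pos; omega⟩
  have hexp := add_pow u (-v) p
  rw [sub_eq_add_neg, hexp, Finset.sum_range_succ]
  have hlast : u ^ p * (-v) ^ (p - p) * (p.choose p : A) = u ^ p := by simp
  rw [hlast]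
  have hrange : Finset.range p = Finset.range (q + 1) := by rw [hq]
  rw [hrange, Finset.sum_range_succ']
  have hzero : ∀ k ∈ Finset.range q,
      u ^ (k + 1) * (-v) ^ (p - (k + 1)) * (p.choose (k + 1) : A) = 0 := by
    intro k hk
    have hkq : k < q := Finset.mem_range.mp hk
    have hk1 : k + 1 ≠ 0 := by omega
    have hklt : k + 1 < p := by omega
    obtain ⟨m, hm⟩ := hp.dvd_choose_self hk1 hklt
    have hCv : (p.choose (k + 1) : A) * v = 0 := by
      rw [hm]
      push_cast
      calc (p : A) * (m : A) * v = (m : A) * ((p : ℕ) • v) := by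
            rw [nsmul_eq_mul]; ring
      _ = 0 := by rw [hv, mul_zero]
    have hCx : (p.choose (k + 1) : A) * (-v) = 0 := by
      rw [mul_neg, hCv, neg_zero]
    have he : p - (k + 1) = (p - (k + 1) - 1) + 1 := by omega
    rw [he]
    calc u ^ (k + 1) * (-v) ^ (p - (k + 1) - 1 + 1) * (p.choose (k + 1) : A)
        = (u ^ (k + 1) * (-v) ^ (p - (k + 1) - 1)) * ((p.choose (k + 1) : A) * (-v)) := by
          ring
    _ = 0 := by rw [hCx, mul_zero]
  rw [Finset.sum_eq_zero hzero, zero_add]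
  have h0 : u ^ 0 * (-v) ^ (p - 0) * (p.choose 0 : A) = (-v) ^ p := by simp
  rw [h0, aux_neg_pow_prime hp v hv]
  ring

end AuxLemmas

/-- **Proposition 3.4 (1).** For a preperfectoid tower, the graded ring homomorphism
`gr_{I₀}(tᵢ) : gr_{I₀}(Rᵢ) → gr_{I₀}(Rᵢ₊₁)` induced by `tᵢ` is injective. -/
theorem stmt8
    (p : ℕ) (hp : p.Prime)
    {R : ℕ → Type u} [∀ i, CommRing (R i)] (t : ∀ i, R i →+* R (i + 1))
    (I0 : Ideal (R 0))
    (hp0 : (p : R 0) ∈ I0)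
    (hb : ∀ i, Function.Injective (tbar R t I0 i))
    (F : ∀ i, R (i + 1) ⧸ I0R R t I0 (i + 1) →+* R i ⧸ I0R R t I0 i)
    (hF : ∀ i x, tbar R t I0 i (F i x) = x ^ p)
    (hd : ∀ i, Function.Surjective (F i))
    (hI0 : I0.IsPrincipal)
    (I1 : Ideal (R 1)) (hI1 : I1.IsPrincipal)
    (hI1p : I1 ^ p = I0R R t I0 1)
    (hker : ∀ i, RingHom.ker (F i) =
      I1.map ((Ideal.Quotient.mk (I0R R t I0 (i + 1))).comp (chain1 R t i)))
    (hg : ∀ i, CondG R t I0 F i) :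
    ∀ i n, Function.Injective
      (grMap (t i) (I0R R t I0 i) (I0R R t I0 (i + 1)) (t_pow_mem R t I0 i) n) := by
  classical
  -- ===== Setup: generators and basic structure =====
  obtain ⟨a0, ha0''⟩ := hI0
  obtain ⟨b1, hb1''⟩ := hI1
  have ha0 : I0 = Ideal.span {a0} := ha0''
  have hb1 : I1 = Ideal.span {b1} := hb1''
  have hg1 : ∀ i, ∀ α ∈ I0R R t I0 i, ∀ x ∈ Itor (I0R R t I0 i) (R i), α * x = 0 :=
    fun i => (hg i).1
  choose σ hσbij hσcomp using fun i => (hg i).2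
  have hI0Rspan : ∀ i, I0R R t I0 i = Ideal.span {chain R t i a0} := by
    intro i
    rw [I0R, ha0, Ideal.map_span, Set.image_singleton]
  have hI1Rspan : ∀ i, I1R R t I1 i = Ideal.span {chain1 R t i b1} := by
    intro i
    rw [I1R, hb1, Ideal.map_span, Set.image_singleton]
  have haS : ∀ i, chain R t i a0 ∈ I0R R t I0 i := by
    intro i; rw [hI0Rspan]; exact Ideal.mem_span_singleton_self _
  have hat : ∀ i, chain R t (i + 1) a0 = t i (chain R t i a0) := fun i => rfl
  have hbt : ∀ i, chain1 R t (i + 1) b1 = t (i + 1) (chain1 R t i b1) := fun i => rfl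
  have hchain : ∀ i, chain R t (i + 1) = (chain1 R t i).comp (chain R t 1) := by
    intro i
    induction i with
    | zero =>
      show chain R t 1 = (RingHom.id (R 1)).comp (chain R t 1)
      exact (RingHom.id_comp _).symm
    | succ i ih =>
      show (t (i + 1)).comp (chain R t (i + 1)) = _
      rw [ih, ← RingHom.comp_assoc]
      rfl
  have hI1pow : ∀ i, (I1R R t I1 i) ^ p = I0R R t I0 (i + 1) := by
    intro i
    rw [I1R, ← Ideal.map_pow, hI1p]
    show Ideal.map (chain1 R t i) (I0R R t I0 1) = I0R R t I0 (i + 1)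
    rw [I0R, I0R, hchain i, ← Ideal.map_map]
  have hbpowI0 : ∀ i, (chain1 R t i b1) ^ p ∈ I0R R t I0 (i + 1) := by
    intro i
    rw [← hI1pow i]
    refine Ideal.pow_mem_pow ?_ p
    rw [hI1Rspan]
    exact Ideal.mem_span_singleton_self _
  have hpR : ∀ i, ((p : ℕ) : R i) ∈ I0R R t I0 i := by
    intro i
    have h1 := Ideal.mem_map_of_mem (chain R t i) hp0
    rwa [map_natCast] at h1
  -- ===== Torsion submodule interface =====
  have memItor_iff : ∀ i (x : R i),
      x ∈ Itor (I0R R t I0 i) (R i) ↔ ∀ α ∈ I0R R t I0 i, ∃ n : ℕ, α ^ n • x = 0 :=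
    fun i x => Iff.rfl
  have hTorI0 : ∀ i (x : R i), x ∈ Itor (I0R R t I0 i) (R i) → x ∈ I0R R t I0 i → x = 0 := by
    intro i x hxT hxI
    rw [hI0Rspan i] at hxI
    obtain ⟨c, hc⟩ := Ideal.mem_span_singleton.mp hxI
    have h1 : chain R t i a0 * x = 0 := hg1 i _ (haS i) x hxT
    have h2 : c ∈ Itor (I0R R t I0 i) (R i) := by
      rw [memItor_iff]
      intro α hα
      rw [hI0Rspan i] at hα
      obtain ⟨d, hd⟩ := Ideal.mem_span_singleton.mp hα
      refine ⟨2, ?_⟩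
      rw [smul_eq_mul, hd]
      calc (chain R t i a0 * d) ^ 2 * c
          = d ^ 2 * (chain R t i a0 * (chain R t i a0 * c)) := by ring
      _ = d ^ 2 * (chain R t i a0 * x) := by rw [← hc]
      _ = 0 := by rw [h1, mul_zero]
    rw [hc]
    exact hg1 i _ (haS i) c h2
  have hpTor : ∀ i (x : R i), x ∈ Itor (I0R R t I0 i) (R i) → (p : ℕ) • x = 0 := by
    intro i x hx
    rw [nsmul_eq_mul]
    exact hg1 i _ (hpR i) x hx
  have htTor : ∀ i (x : R i), x ∈ Itor (I0R R t I0 i) (R i) →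
      t i x ∈ Itor (I0R R t I0 (i + 1)) (R (i + 1)) := by
    intro i x hx
    rw [memItor_iff]
    intro α hα
    rw [hI0Rspan (i + 1)] at hα
    obtain ⟨d, hd⟩ := Ideal.mem_span_singleton.mp hα
    refine ⟨1, ?_⟩
    rw [pow_one, smul_eq_mul, hd, hat i]
    calc t i (chain R t i a0) * d * t i x
        = d * t i (chain R t i a0 * x) := by rw [map_mul]; ring
    _ = 0 := by rw [hg1 i _ (haS i) x hx, map_zero, mul_zero]
  -- ===== The reduction maps on quotients =====
  have htbar : ∀ i (x : R i),
      tbar R t I0 i (Ideal.Quotient.mk (I0R R t I0 i) x)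
        = Ideal.Quotient.mk (I0R R t I0 (i + 1)) (t i x) := by
    intro i x
    exact Ideal.quotientMap_mk
  -- ===== (E2): t ∘ σ = Frobenius on torsion =====
  have hE2 : ∀ i (x : (Itor (I0R R t I0 (i + 1)) (R (i + 1)))),
      t i (σ i x).1 = (x.1 : R (i + 1)) ^ p := by
    intro i x
    have h1 : Ideal.Quotient.mk (I0R R t I0 (i + 1)) (t i (σ i x).1)
        = Ideal.Quotient.mk (I0R R t I0 (i + 1)) (x.1 ^ p) := by
      calc Ideal.Quotient.mk (I0R R t I0 (i + 1)) (t i (σ i x).1)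
          = tbar R t I0 i (Ideal.Quotient.mk (I0R R t I0 i) (σ i x).1) := (htbar i _).symm
      _ = tbar R t I0 i (F i (Ideal.Quotient.mk (I0R R t I0 (i + 1)) x.1)) := by
          rw [hσcomp i x]
      _ = (Ideal.Quotient.mk (I0R R t I0 (i + 1)) x.1) ^ p := hF i _
      _ = Ideal.Quotient.mk (I0R R t I0 (i + 1)) (x.1 ^ p) := (map_pow _ _ _).symm
    have hsub : t i (σ i x).1 - x.1 ^ p ∈ I0R R t I0 (i + 1) := Ideal.Quotient.eq.mp h1
    have hTor1 : t i (σ i x).1 ∈ Itor (I0R R t I0 (i + 1)) (R (i + 1)) := htTor i _ (σ i x).2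
    have hTor2 : (x.1 : R (i + 1)) ^ p ∈ Itor (I0R R t I0 (i + 1)) (R (i + 1)) := by
      obtain ⟨q, hq⟩ : ∃ q, p = q + 1 := ⟨p - 1, by have := hp.pos; omega⟩
      rw [hq, pow_succ]
      exact mul_mem_Itor x.2
    exact sub_eq_zero.mp (hTorI0 (i + 1) _ (sub_mem hTor1 hTor2) hsub)
  -- ===== torsion ∩ I1R = 0, hence b · torsion = 0 =====
  have hTorI1 : ∀ i (x : R (i + 1)), x ∈ Itor (I0R R t I0 (i + 1)) (R (i + 1)) →
      x ∈ I1R R t I1 i → x = 0 := by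
    intro i x hxT hxI
    have h1 : Ideal.Quotient.mk (I0R R t I0 (i + 1)) x ∈ RingHom.ker (F i) := by
      rw [hker i]
      have h2 := Ideal.mem_map_of_mem (Ideal.Quotient.mk (I0R R t I0 (i + 1))) hxI
      rwa [I1R, Ideal.map_map] at h2
    have h2 : F i (Ideal.Quotient.mk (I0R R t I0 (i + 1)) x) = 0 := RingHom.mem_ker.mp h1
    have h3 : Ideal.Quotient.mk (I0R R t I0 i) (σ i ⟨x, hxT⟩).1 = 0 := by
      rw [hσcomp i ⟨x, hxT⟩]; exact h2
    have h5 : (σ i ⟨x, hxT⟩).1 = 0 :=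
      hTorI0 i _ (σ i ⟨x, hxT⟩).2 (Ideal.Quotient.eq_zero_iff_mem.mp h3)
    have h6 : (σ i (0 : (Itor (I0R R t I0 (i + 1)) (R (i + 1))))).1 = 0 := by
      have h7 : Ideal.Quotient.mk (I0R R t I0 i)
          (σ i (0 : (Itor (I0R R t I0 (i + 1)) (R (i + 1))))).1 = 0 := by
        rw [hσcomp i 0]
        simp
      exact hTorI0 i _ (σ i 0).2 (Ideal.Quotient.eq_zero_iff_mem.mp h7)
    have h8 : σ i ⟨x, hxT⟩ = σ i 0 := Subtype.ext (by rw [h5, h6])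
    have h9 := (hσbij i).1 h8
    have h10 := congrArg Subtype.val h9
    simpa using h10
  have hbTor : ∀ i (x : R (i + 1)), x ∈ Itor (I0R R t I0 (i + 1)) (R (i + 1)) →
      chain1 R t i b1 * x = 0 := by
    intro i x hx
    apply hTorI1 i _ (mul_mem_Itor hx)
    rw [hI1Rspan]
    exact Ideal.mul_mem_right x _ (Ideal.mem_span_singleton_self _)
  -- ===== kernel of Frobenius on R_{i+1}/I0 is the image of I1 =====
  have hkerF : ∀ i (z : R (i + 1)),
      (Ideal.Quotient.mk (I0R R t I0 (i + 1)) z) ^ p = 0 →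
      ∃ r, z - chain1 R t i b1 * r ∈ I0R R t I0 (i + 1) := by
    intro i z hz
    have h1 : tbar R t I0 i (F i (Ideal.Quotient.mk (I0R R t I0 (i + 1)) z)) = 0 := by
      rw [hF i]; exact hz
    have h2 : F i (Ideal.Quotient.mk (I0R R t I0 (i + 1)) z) = 0 := by
      apply hb i
      rw [h1, map_zero]
    have h3 : Ideal.Quotient.mk (I0R R t I0 (i + 1)) z ∈ RingHom.ker (F i) :=
      RingHom.mem_ker.mpr h2
    rw [hker i] at h3
    have h4 : Ideal.map ((Ideal.Quotient.mk (I0R R t I0 (i + 1))).comp (chain1 R t i)) I1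
        = Ideal.span {Ideal.Quotient.mk (I0R R t I0 (i + 1)) (chain1 R t i b1)} := by
      rw [hb1, Ideal.map_span, Set.image_singleton]
      rfl
    rw [h4] at h3
    obtain ⟨cbar, hcbar⟩ := Ideal.mem_span_singleton.mp h3
    obtain ⟨r, rfl⟩ := Ideal.Quotient.mk_surjective cbar
    refine ⟨r, Ideal.Quotient.eq.mp ?_⟩
    rw [map_mul]
    exact hcbar
  -- ===== Core lemma (B): p-th roots of torsion mod I0 lie in torsion + I1 =====
  have hB : ∀ i (ξ w : R (i + 1)), w ∈ Itor (I0R R t I0 (i + 1)) (R (i + 1)) →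
      ξ ^ p - w ∈ I0R R t I0 (i + 1) →
      ∃ τ c, τ ∈ Itor (I0R R t I0 (i + 1)) (R (i + 1)) ∧ ξ = τ + chain1 R t i b1 * c := by
    intro i ξ w hw hξw
    obtain ⟨w₁, hw₁⟩ := (hσbij (i + 1)).2 ⟨w, hw⟩
    have hE2' : t (i + 1) w = (w₁.1 : R (i + 1 + 1)) ^ p := by
      have h := hE2 (i + 1) w₁
      rw [hw₁] at h
      exact h
    have hpw₁ : (p : ℕ) • (w₁.1 : R (i + 1 + 1)) = 0 := hpTor _ _ w₁.2
    have hc0 : (t (i + 1) ξ - w₁.1) ^ p = t (i + 1) (ξ ^ p - w) := by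
      rw [aux_sub_pow_prime hp _ _ hpw₁, map_sub, map_pow, hE2']
    have hc0I : (t (i + 1) ξ - w₁.1) ^ p ∈ I0R R t I0 (i + 1 + 1) := by
      rw [hc0, I0R_succ]
      exact Ideal.mem_map_of_mem _ hξw
    have hmk : (Ideal.Quotient.mk (I0R R t I0 (i + 1 + 1)) (t (i + 1) ξ - w₁.1)) ^ p = 0 := by
      rw [← map_pow]
      exact Ideal.Quotient.eq_zero_iff_mem.mpr hc0I
    obtain ⟨r, hr⟩ := hkerF (i + 1) _ hmk
    -- the key computation: b^(p-1) ξ dies in R_{i+1}/I0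
    have hbppow : (chain1 R t i b1) ^ p = (chain1 R t i b1) ^ (p - 1) * chain1 R t i b1 := by
      conv_lhs => rw [show p = (p - 1) + 1 from by have := hp.pos; omega, pow_succ]
    have hbppow' : (chain1 R t (i + 1) b1) ^ p
        = (chain1 R t (i + 1) b1) ^ (p - 1) * chain1 R t (i + 1) b1 := by
      conv_lhs => rw [show p = (p - 1) + 1 from by have := hp.pos; omega, pow_succ]
    have hbppow'' : (chain1 R t (i + 1) b1) ^ (p - 1)
        = (chain1 R t (i + 1) b1) ^ (p - 2) * chain1 R t (i + 1) b1 := by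
      conv_lhs => rw [show p - 1 = (p - 2) + 1 from by have := hp.two_le; omega, pow_succ]
    have hkey : t (i + 1) ((chain1 R t i b1) ^ (p - 1) * ξ) ∈ I0R R t I0 (i + 1 + 1) := by
      have hexp : t (i + 1) ((chain1 R t i b1) ^ (p - 1) * ξ)
          = (chain1 R t (i + 1) b1) ^ (p - 1) * w₁.1
            + ((chain1 R t (i + 1) b1) ^ (p - 1) * (chain1 R t (i + 1) b1 * r)
            + (chain1 R t (i + 1) b1) ^ (p - 1)
              * ((t (i + 1) ξ - w₁.1) - chain1 R t (i + 1) b1 * r)) := by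
        rw [map_mul, map_pow, ← hbt i]
        ring
      rw [hexp]
      have hz1 : (chain1 R t (i + 1) b1) ^ (p - 1) * w₁.1 = 0 := by
        rw [hbppow'', mul_assoc, hbTor (i + 1) _ w₁.2, mul_zero]
      rw [hz1, zero_add]
      apply add_mem
      · have h5 : (chain1 R t (i + 1) b1) ^ (p - 1) * (chain1 R t (i + 1) b1 * r)
            = (chain1 R t (i + 1) b1) ^ p * r := by
          rw [hbppow']; ring
        rw [h5]
        exact Ideal.mul_mem_right r _ (hbpowI0 (i + 1))
      · exact Ideal.mul_mem_left _ _ hr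
    have hmem : (chain1 R t i b1) ^ (p - 1) * ξ ∈ I0R R t I0 (i + 1) := by
      apply Ideal.Quotient.eq_zero_iff_mem.mp
      apply hb (i + 1)
      rw [map_zero, htbar]
      exact Ideal.Quotient.eq_zero_iff_mem.mpr hkey
    have hspan : I0R R t I0 (i + 1) = Ideal.span {(chain1 R t i b1) ^ p} := by
      rw [← hI1pow i, hI1Rspan i, Ideal.span_singleton_pow]
    rw [hspan] at hmem
    obtain ⟨c, hc⟩ := Ideal.mem_span_singleton.mp hmem
    refine ⟨ξ - chain1 R t i b1 * c, c, ?_, by ring⟩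
    have hτ0 : (chain1 R t i b1) ^ (p - 1) * (ξ - chain1 R t i b1 * c) = 0 := by
      have h5 : (chain1 R t i b1) ^ (p - 1) * (chain1 R t i b1 * c)
          = (chain1 R t i b1) ^ p * c := by
        rw [hbppow]; ring
      rw [mul_sub, h5, ← hc, sub_self]
    rw [memItor_iff]
    intro α hα
    rw [hspan] at hα
    obtain ⟨d, hd⟩ := Ideal.mem_span_singleton.mp hα
    refine ⟨1, ?_⟩
    rw [pow_one, smul_eq_mul, hd]
    calc (chain1 R t i b1) ^ p * d * (ξ - chain1 R t i b1 * c)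
        = (chain1 R t i b1 * d)
          * ((chain1 R t i b1) ^ (p - 1) * (ξ - chain1 R t i b1 * c)) := by
          rw [hbppow]; ring
    _ = 0 := by rw [hτ0, mul_zero]
  -- ===== Lemma (Q): t-preimages of torsion classes are torsion classes =====
  have hQ : ∀ i (x : R i) (w : R (i + 1)), w ∈ Itor (I0R R t I0 (i + 1)) (R (i + 1)) →
      t i x - w ∈ I0R R t I0 (i + 1) →
      ∃ u, u ∈ Itor (I0R R t I0 i) (R i) ∧ x - u ∈ I0R R t I0 i := by
    intro i x w hw hxw
    obtain ⟨ξbar, hξbar⟩ := hd i (Ideal.Quotient.mk (I0R R t I0 i) x)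
    obtain ⟨ξ, rfl⟩ := Ideal.Quotient.mk_surjective ξbar
    have h1 : Ideal.Quotient.mk (I0R R t I0 (i + 1)) (ξ ^ p)
        = Ideal.Quotient.mk (I0R R t I0 (i + 1)) w := by
      calc Ideal.Quotient.mk (I0R R t I0 (i + 1)) (ξ ^ p)
          = (Ideal.Quotient.mk (I0R R t I0 (i + 1)) ξ) ^ p := map_pow _ _ _
      _ = tbar R t I0 i (F i (Ideal.Quotient.mk (I0R R t I0 (i + 1)) ξ)) := (hF i _).symm
      _ = tbar R t I0 i (Ideal.Quotient.mk (I0R R t I0 i) x) := by rw [hξbar]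
      _ = Ideal.Quotient.mk (I0R R t I0 (i + 1)) (t i x) := htbar i x
      _ = Ideal.Quotient.mk (I0R R t I0 (i + 1)) w := Ideal.Quotient.eq.mpr hxw
    obtain ⟨τ, c, hτ, hξeq⟩ := hB i ξ w hw (Ideal.Quotient.eq.mp h1)
    refine ⟨(σ i ⟨τ, hτ⟩).1, (σ i ⟨τ, hτ⟩).2, Ideal.Quotient.eq.mp ?_⟩
    have h3 : F i (Ideal.Quotient.mk (I0R R t I0 (i + 1)) (chain1 R t i b1 * c)) = 0 := by
      apply RingHom.mem_ker.mp
      rw [hker i]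
      have h4 : chain1 R t i b1 * c ∈ I1R R t I1 i := by
        rw [hI1Rspan]
        exact Ideal.mul_mem_right c _ (Ideal.mem_span_singleton_self _)
      have h5 := Ideal.mem_map_of_mem (Ideal.Quotient.mk (I0R R t I0 (i + 1))) h4
      rwa [I1R, Ideal.map_map] at h5
    calc Ideal.Quotient.mk (I0R R t I0 i) x
        = F i (Ideal.Quotient.mk (I0R R t I0 (i + 1)) ξ) := hξbar.symm
    _ = F i (Ideal.Quotient.mk (I0R R t I0 (i + 1)) τ
          + Ideal.Quotient.mk (I0R R t I0 (i + 1)) (chain1 R t i b1 * c)) := by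
        rw [← map_add]
        exact congrArg _ (congrArg _ hξeq)
    _ = F i (Ideal.Quotient.mk (I0R R t I0 (i + 1)) τ) := by rw [map_add, h3, add_zero]
    _ = Ideal.Quotient.mk (I0R R t I0 i) (σ i ⟨τ, hτ⟩).1 := (hσcomp i ⟨τ, hτ⟩).symm
  -- ===== Key statement : t reflects powers of I0 =====
  have hKEY : ∀ i (n : ℕ) (x : R i), x ∈ (I0R R t I0 i) ^ n →
      t i x ∈ (I0R R t I0 (i + 1)) ^ (n + 1) → x ∈ (I0R R t I0 i) ^ (n + 1) := by
    intro i n x hx htx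
    cases n with
    | zero =>
      simp only [zero_add, pow_one] at htx ⊢
      have h1 : tbar R t I0 i (Ideal.Quotient.mk (I0R R t I0 i) x) = 0 := by
        rw [htbar i x]
        exact Ideal.Quotient.eq_zero_iff_mem.mpr htx
      have h2 : Ideal.Quotient.mk (I0R R t I0 i) x = 0 := by
        apply hb i
        rw [h1, map_zero]
      exact Ideal.Quotient.eq_zero_iff_mem.mp h2
    | succ m =>
      have hpowspan : ∀ j (k : ℕ),
          (I0R R t I0 j) ^ k = Ideal.span {(chain R t j a0) ^ k} := by
        intro j k
        rw [hI0Rspan, Ideal.span_singleton_pow]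
      rw [hpowspan i (m + 1)] at hx
      rw [hpowspan (i + 1) (m + 1 + 1)] at htx
      obtain ⟨y, hy⟩ := Ideal.mem_span_singleton.mp hx
      obtain ⟨z, hz⟩ := Ideal.mem_span_singleton.mp htx
      have hannw : (chain R t (i + 1) a0) ^ (m + 1)
          * (t i y - chain R t (i + 1) a0 * z) = 0 := by
        have h1 : t i x = (chain R t (i + 1) a0) ^ (m + 1) * t i y := by
          rw [hy, map_mul, map_pow, hat i]
        calc (chain R t (i + 1) a0) ^ (m + 1) * (t i y - chain R t (i + 1) a0 * z)
            = (chain R t (i + 1) a0) ^ (m + 1) * t i y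
              - (chain R t (i + 1) a0) ^ (m + 1 + 1) * z := by ring
        _ = t i x - t i x := by rw [← h1, ← hz]
        _ = 0 := sub_self _
      have hw : t i y - chain R t (i + 1) a0 * z
          ∈ Itor (I0R R t I0 (i + 1)) (R (i + 1)) := by
        rw [memItor_iff]
        intro α hα
        rw [hI0Rspan (i + 1)] at hα
        obtain ⟨d, hd⟩ := Ideal.mem_span_singleton.mp hα
        refine ⟨m + 1, ?_⟩
        rw [smul_eq_mul, hd, mul_pow]
        calc (chain R t (i + 1) a0) ^ (m + 1) * d ^ (m + 1)
              * (t i y - chain R t (i + 1) a0 * z)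
            = d ^ (m + 1) * ((chain R t (i + 1) a0) ^ (m + 1)
              * (t i y - chain R t (i + 1) a0 * z)) := by ring
        _ = 0 := by rw [hannw, mul_zero]
      have hQin : t i y - (t i y - chain R t (i + 1) a0 * z) ∈ I0R R t I0 (i + 1) := by
        have h6 : t i y - (t i y - chain R t (i + 1) a0 * z)
            = chain R t (i + 1) a0 * z := by ring
        rw [h6, hI0Rspan (i + 1)]
        exact Ideal.mul_mem_right z _ (Ideal.mem_span_singleton_self _)
      obtain ⟨u, hu, hyu⟩ := hQ i y _ hw hQin
      have hxu : x = (chain R t i a0) ^ (m + 1) * (y - u) := by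
        have h0 : (chain R t i a0) ^ (m + 1) * u = 0 := by
          have h00 : chain R t i a0 * u = 0 := hg1 i _ (haS i) u hu
          calc (chain R t i a0) ^ (m + 1) * u
              = (chain R t i a0) ^ m * (chain R t i a0 * u) := by rw [pow_succ]; ring
          _ = 0 := by rw [h00, mul_zero]
        calc x = (chain R t i a0) ^ (m + 1) * y := hy
        _ = (chain R t i a0) ^ (m + 1) * u + (chain R t i a0) ^ (m + 1) * (y - u) := by ring
        _ = (chain R t i a0) ^ (m + 1) * (y - u) := by rw [h0, zero_add]
      rw [hxu, pow_succ]
      apply Ideal.mul_mem_mul _ hyu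
      rw [hpowspan i (m + 1)]
      exact Ideal.mem_span_singleton_self _
  -- ===== Conclusion =====
  intro i n X Y h
  obtain ⟨⟨x, hx⟩, rfl⟩ := Submodule.Quotient.mk_surjective _ X
  obtain ⟨⟨y, hy⟩, rfl⟩ := Submodule.Quotient.mk_surjective _ Y
  have h' : grMap (t i) (I0R R t I0 i) (I0R R t I0 (i + 1)) (t_pow_mem R t I0 i) n
        (grMk (I0R R t I0 i) n x hx)
      = grMap (t i) (I0R R t I0 i) (I0R R t I0 (i + 1)) (t_pow_mem R t I0 i) n
        (grMk (I0R R t I0 i) n y hy) := h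
  rw [grMap_mk, grMap_mk, grMk_eq_iff] at h'
  have h'' : t i (x - y) ∈ (I0R R t I0 (i + 1)) ^ (n + 1) := by
    rw [map_sub]; exact h'
  have hmem := hKEY i n (x - y) (sub_mem hx hy) h''
  show grMk (I0R R t I0 i) n x hx = grMk (I0R R t I0 i) n y hy
  rw [grMk_eq_iff]
  exact hmem
end Preamble
end

section
/- Let R = {R_i, t_i}_{i≥0} be a preperfectoid tower arising from a pair (R, I_0), with distinguished principal ideal I_1 ⊆ R_1 as in condition (f). Then for every i ≥ 0, the injective ring homomorphism R_{i+1}/I_1R_{i+1} → R_{i+1}/I_0R_{i+1} induced by the absolute Frobenius of R_{i+1}/I_0R_{i+1} extends to an injective morphism of graded rings φ' : gr_{I_1}(R_{i+1}) → gr_{I_0}(R_{i+1}). -/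
open Submodule

section Preamble

variable {A : Type*} [CommRing A]

universe u

namespace Stmt9Aux

variable {A : Type u} [CommRing A] {p : ℕ}

lemma mem_Itor_iff {I : Ideal A} {x : A} :
    x ∈ Itor I A ↔ ∀ a ∈ I, ∃ n : ℕ, a ^ n • x = 0 := Iff.rfl

lemma freshman_add (hp : p.Prime) (hpA : (p : A) = 0) (a b : A) :
    (a + b) ^ p = a ^ p + b ^ p := by
  rw [add_pow_prime_eq' hp, hpA, zero_mul, add_zero]

lemma freshman_sub (hp : p.Prime) (hpA : (p : A) = 0) (a b : A) :
    (a - b) ^ p = a ^ p - b ^ p := by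
  have h := freshman_add hp hpA (a - b) b
  rw [sub_add_cancel] at h
  exact eq_sub_of_add_eq h.symm

lemma torKer {KK : Ideal A} {g : A} (hgen : KK = Ideal.span {g})
    (h1 : ∀ a ∈ KK, ∀ x ∈ Itor KK A, a * x = 0) :
    ∀ x ∈ Itor KK A, x ∈ KK → x = 0 := by
  intro x hx hxK
  have hgK : g ∈ KK := gen_mem hgen
  rw [hgen, Ideal.mem_span_singleton'] at hxK
  obtain ⟨σ, hσ⟩ := hxK
  have hgx : g * x = 0 := h1 g hgK x hx
  have hσT : σ ∈ Itor KK A := by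
    rw [mem_Itor_iff]
    intro a ha
    rw [hgen, Ideal.mem_span_singleton'] at ha
    obtain ⟨c, hc⟩ := ha
    refine ⟨2, ?_⟩
    have e : a ^ 2 * σ = c ^ 2 * (g * x) := by rw [← hc, ← hσ]; ring
    rw [smul_eq_mul, e, hgx, mul_zero]
  have h2 : g * σ = 0 := h1 g hgK σ hσT
  rw [← hσ, mul_comm, h2]

lemma ann_mem_Itor (hppos : 0 < p) {KK : Ideal A} {g x : A} {m : ℕ}
    (hgen : KK = Ideal.span {g ^ p}) (hgx : g ^ m * x = 0) : x ∈ Itor KK A := by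
  rw [mem_Itor_iff]
  intro a ha
  rw [hgen, Ideal.mem_span_singleton'] at ha
  obtain ⟨c, hc⟩ := ha
  refine ⟨m, ?_⟩
  have hle : m ≤ p * m := Nat.le_mul_of_pos_left m hppos
  have e2 : p * m - m + m = p * m := by omega
  have e : a ^ m = c ^ m * g ^ (p * m - m) * g ^ m := by
    rw [← hc, mul_pow, ← pow_mul, mul_assoc, ← pow_add, e2]
  rw [smul_eq_mul, e, mul_assoc, hgx, mul_zero]

variable {J K : Ideal A}

lemma frob_mem (hJK : K = J ^ p) {n : ℕ} {x : A} (hx : x ∈ J ^ n) : x ^ p ∈ K ^ n := by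
  have h := Ideal.pow_mem_pow hx p
  rw [hJK, ← pow_mul, mul_comm p n, pow_mul]
  exact h

lemma frob_add_sub (hp : p.Prime) (hJK : K = J ^ p) (hpJ : (p : A) ∈ K) {n : ℕ}
    {x y : A} (hx : x ∈ J ^ n) (hy : y ∈ J ^ n) :
    (x + y) ^ p - (x ^ p + y ^ p) ∈ K ^ (n + 1) := by
  have heq : (x + y) ^ p - (x ^ p + y ^ p)
      = (p : A) * ∑ k ∈ Finset.Ioo 0 p, x ^ k * y ^ (p - k) * ((p.choose k / p : ℕ) : A) := by
    rw [add_pow_prime_eq' hp]; ring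
  rw [heq]
  have hS : (∑ k ∈ Finset.Ioo 0 p, x ^ k * y ^ (p - k) * ((p.choose k / p : ℕ) : A)) ∈ K ^ n := by
    apply Ideal.sum_mem
    intro k hk
    rw [Finset.mem_Ioo] at hk
    apply Ideal.mul_mem_right
    have h1 : x ^ k ∈ J ^ (n * k) := by
      have h := Ideal.pow_mem_pow hx k; rwa [← pow_mul] at h
    have h2 : y ^ (p - k) ∈ J ^ (n * (p - k)) := by
      have h := Ideal.pow_mem_pow hy (p - k); rwa [← pow_mul] at h
    have h3 := mul_mem_pow_add h1 h2
    have h5 : k + (p - k) = p := by omega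
    have e : n * k + n * (p - k) = n * p := by
      calc n * k + n * (p - k) = n * (k + (p - k)) := by ring
        _ = n * p := by rw [h5]
    rw [e] at h3
    rw [hJK, ← pow_mul, mul_comm p n]
    exact h3
  have h6 := Ideal.mul_mem_mul hpJ hS
  rwa [← pow_succ'] at h6

lemma sum_mem_pow (hp : p.Prime) {n : ℕ} {x y : A} (hx : x ∈ J ^ n) (hy : y ∈ J ^ (n + 1)) :
    (∑ k ∈ Finset.Ioo 0 p, x ^ k * y ^ (p - k) * ((p.choose k / p : ℕ) : A)) ∈ J ^ (n * p + 1) := by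
  apply Ideal.sum_mem
  intro k hk
  rw [Finset.mem_Ioo] at hk
  apply Ideal.mul_mem_right
  have h1 : x ^ k ∈ J ^ (n * k) := by
    have h := Ideal.pow_mem_pow hx k; rwa [← pow_mul] at h
  have h2 : y ^ (p - k) ∈ J ^ ((n + 1) * (p - k)) := by
    have h := Ideal.pow_mem_pow hy (p - k); rwa [← pow_mul] at h
  have h3 := mul_mem_pow_add h1 h2
  have h5 : k + (p - k) = p := by omega
  have e : n * k + (n + 1) * (p - k) = n * p + (p - k) := by
    calc n * k + (n + 1) * (p - k) = n * (k + (p - k)) + (p - k) := by ring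
      _ = n * p + (p - k) := by rw [h5]
  have hle : n * p + 1 ≤ n * k + (n + 1) * (p - k) := by
    rw [e]; omega
  exact Ideal.pow_le_pow_right hle h3

lemma frob_wd (hp : p.Prime) (hJK : K = J ^ p) (hpJ : (p : A) ∈ K) {n : ℕ}
    {x y : A} (hy : y ∈ J ^ n) (hxy : x - y ∈ J ^ (n + 1)) :
    x ^ p - y ^ p ∈ K ^ (n + 1) := by
  have hx' : x = y + (x - y) := by ring
  have heq : x ^ p - y ^ p = (x - y) ^ p
      + (p : A) * ∑ k ∈ Finset.Ioo 0 p, y ^ k * (x - y) ^ (p - k) * ((p.choose k / p : ℕ) : A) := by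
    conv_lhs => rw [hx']
    rw [add_pow_prime_eq' hp]; ring
  rw [heq]
  apply add_mem
  · exact frob_mem hJK hxy
  · have hS := sum_mem_pow hp hy hxy
    have h2 := Ideal.mul_mem_mul hpJ hS
    have hle : p * (n + 1) ≤ p + (n * p + 1) := by
      have e : p * (n + 1) = p + n * p := by ring
      omega
    have h3 : J ^ (p + (n * p + 1)) ≤ J ^ (p * (n + 1)) := Ideal.pow_le_pow_right hle
    rw [hJK, ← pow_mul]
    apply h3
    rw [pow_add]
    rw [hJK] at h2
    exact h2

end Stmt9Aux

namespace Stmt9Aux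

variable {A : Type u} [CommRing A] {p : ℕ}

lemma grPiece_exists (J : Ideal A) (n : ℕ) (q : GrPiece J n) :
    ∃ x hx, q = grMk J n x hx := by
  obtain ⟨y, rfl⟩ := Submodule.Quotient.mk_surjective _ q
  exact ⟨y.1, y.2, rfl⟩

lemma grMk_eq_zero_iff (J : Ideal A) (n : ℕ) {x : A} (hx : x ∈ J ^ n) :
    grMk J n x hx = 0 ↔ x ∈ J ^ (n + 1) := by
  rw [grMk, Submodule.Quotient.mk_eq_zero]
  exact Iff.rfl

variable {J K : Ideal A}

noncomputable def frobFun (hp : p.Prime) (hJK : K = J ^ p) (hpJ : (p : A) ∈ K) (n : ℕ) :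
    GrPiece J n → GrPiece K n := by
  refine Quotient.lift (fun x : ↥(J ^ n) => grMk K n (x.1 ^ p) (frob_mem hJK x.2)) ?_
  intro x y hxy
  have hxy0 : x - y ∈ Submodule.comap (J ^ n : Ideal A).subtype (J ^ (n + 1) : Ideal A) :=
    Submodule.quotientRel_def _ |>.mp hxy
  have hxy' : (x : A) - (y : A) ∈ J ^ (n + 1) := hxy0
  rw [grMk_eq_iff]
  exact frob_wd hp hJK hpJ y.2 hxy'

lemma frobFun_mk (hp : p.Prime) (hJK : K = J ^ p) (hpJ : (p : A) ∈ K) (n : ℕ)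
    (x : A) (hx : x ∈ J ^ n) :
    frobFun hp hJK hpJ n (grMk J n x hx) = grMk K n (x ^ p) (frob_mem hJK hx) := rfl

lemma grMk_add (J : Ideal A) (n : ℕ) {x y : A} (hx : x ∈ J ^ n) (hy : y ∈ J ^ n) :
    grMk J n x hx + grMk J n y hy = grMk J n (x + y) (add_mem hx hy) := by
  rw [grMk, grMk, grMk, ← Submodule.Quotient.mk_add]
  rfl

lemma frobFun_add (hp : p.Prime) (hJK : K = J ^ p) (hpJ : (p : A) ∈ K) (n : ℕ)
    (a b : GrPiece J n) :
    frobFun hp hJK hpJ n (a + b) = frobFun hp hJK hpJ n a + frobFun hp hJK hpJ n b := by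
  obtain ⟨x, hx, rfl⟩ := grPiece_exists J n a
  obtain ⟨y, hy, rfl⟩ := grPiece_exists J n b
  rw [grMk_add, frobFun_mk, frobFun_mk, frobFun_mk, grMk_add, grMk_eq_iff]
  exact frob_add_sub hp hJK hpJ hx hy

end Stmt9Aux

namespace Stmt9Tower

open Stmt9Aux

variable {R : ℕ → Type u} [∀ i, CommRing (R i)] (t : ∀ i, R i →+* R (i + 1)) (I0 : Ideal (R 0))

lemma chain1_comp (j : ℕ) : (chain1 R t j).comp (chain R t 1) = chain R t (j + 1) := by
  induction j with
  | zero =>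
    ext x
    rfl
  | succ j ih =>
    ext x
    show t (j + 1) (((chain1 R t j).comp (chain R t 1)) x) = chain R t (j + 2) x
    rw [ih]
    rfl

lemma Kspan {p : ℕ} (I1 : Ideal (R 1)) {f1 : R 1} (hf1 : I1 = Ideal.span {f1})
    (hI1p : I1 ^ p = I0R R t I0 1) (j : ℕ) :
    I0R R t I0 (j + 1) = Ideal.span {chain1 R t j f1 ^ p} := by
  have h1 : I0R R t I0 (j + 1) = (I0R R t I0 1).map (chain1 R t j) := by
    rw [I0R, I0R, Ideal.map_map, chain1_comp]
  rw [h1, ← hI1p, Ideal.map_pow, hf1, Ideal.map_span, Set.image_singleton,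
    Ideal.span_singleton_pow]

lemma Jspan (I1 : Ideal (R 1)) {f1 : R 1} (hf1 : I1 = Ideal.span {f1}) (j : ℕ) :
    I1R R t I1 j = Ideal.span {chain1 R t j f1} := by
  rw [I1R, hf1, Ideal.map_span, Set.image_singleton]

lemma Kprin {g₀ : R 0} (hg₀ : I0 = Ideal.span {g₀}) (j : ℕ) :
    I0R R t I0 j = Ideal.span {chain R t j g₀} := by
  rw [I0R, hg₀, Ideal.map_span, Set.image_singleton]

lemma p_mem_K {p : ℕ} (hp0 : (p : R 0) ∈ I0) (j : ℕ) : (p : R j) ∈ I0R R t I0 j := by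
  have h := Ideal.mem_map_of_mem (chain R t j) hp0
  rwa [map_natCast] at h

lemma tbar_mk (j : ℕ) (x : R j) :
    tbar R t I0 j (Ideal.Quotient.mk (I0R R t I0 j) x)
      = Ideal.Quotient.mk (I0R R t I0 (j + 1)) (t j x) := by
  rw [tbar, Ideal.quotientMap_mk]

variable {p : ℕ} (F : ∀ i, R (i + 1) ⧸ I0R R t I0 (i + 1) →+* R i ⧸ I0R R t I0 i)

lemma kerF_span (I1 : Ideal (R 1)) {f1 : R 1} (hf1 : I1 = Ideal.span {f1})
    (hker : ∀ i, RingHom.ker (F i) =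
      I1.map ((Ideal.Quotient.mk (I0R R t I0 (i + 1))).comp (chain1 R t i))) (j : ℕ) :
    RingHom.ker (F j)
      = Ideal.span {Ideal.Quotient.mk (I0R R t I0 (j + 1)) (chain1 R t j f1)} := by
  rw [hker j, hf1, Ideal.map_span, Set.image_singleton]
  rfl

lemma lemA (hb : ∀ i, Function.Injective (tbar R t I0 i))
    (hF : ∀ i x, tbar R t I0 i (F i x) = x ^ p)
    (I1 : Ideal (R 1)) {f1 : R 1} (hf1 : I1 = Ideal.span {f1})
    (hker : ∀ i, RingHom.ker (F i) =
      I1.map ((Ideal.Quotient.mk (I0R R t I0 (i + 1))).comp (chain1 R t i))) (j : ℕ)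
    (z : R (j + 1) ⧸ I0R R t I0 (j + 1)) (hz : z ^ p = 0) :
    ∃ w, z = w * Ideal.Quotient.mk (I0R R t I0 (j + 1)) (chain1 R t j f1) := by
  have h1 : F j z = 0 := by
    apply hb j
    rw [hF j z, hz, map_zero]
  have h2 : z ∈ RingHom.ker (F j) := h1
  rw [kerF_span t I0 F I1 hf1 hker j, Ideal.mem_span_singleton'] at h2
  obtain ⟨w, hw⟩ := h2
  exact ⟨w, hw.symm⟩

lemma Fzero (hb : ∀ i, Function.Injective (tbar R t I0 i))
    (hF : ∀ i x, tbar R t I0 i (F i x) = x ^ p)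
    (I1 : Ideal (R 1)) {f1 : R 1} (hf1 : I1 = Ideal.span {f1})
    (hI1p : I1 ^ p = I0R R t I0 1) (j : ℕ) :
    F j (Ideal.Quotient.mk (I0R R t I0 (j + 1)) (chain1 R t j f1)) = 0 := by
  apply hb j
  rw [hF j, map_zero, ← map_pow, Ideal.Quotient.eq_zero_iff_mem,
    Kspan t I0 I1 hf1 hI1p j]
  exact Ideal.mem_span_singleton_self _

lemma fT_zero (hb : ∀ i, Function.Injective (tbar R t I0 i))
    (hF : ∀ i x, tbar R t I0 i (F i x) = x ^ p)
    (I1 : Ideal (R 1)) {f1 : R 1} (hf1 : I1 = Ideal.span {f1})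
    (hI1p : I1 ^ p = I0R R t I0 1)
    (hg : ∀ i, CondG R t I0 F i) {g₀ : R 0} (hg₀ : I0 = Ideal.span {g₀}) (j : ℕ) :
    ∀ v ∈ Itor (I0R R t I0 (j + 1)) (R (j + 1)), chain1 R t j f1 * v = 0 := by
  intro v hv
  obtain ⟨Ftor, hbij, hcompat⟩ := (hg j).2
  have hu : chain1 R t j f1 * v ∈ Itor (I0R R t I0 (j + 1)) (R (j + 1)) := mul_mem_Itor hv
  have hFu : F j (Ideal.Quotient.mk (I0R R t I0 (j + 1)) (chain1 R t j f1 * v)) = 0 := by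
    rw [map_mul, map_mul, Fzero t I0 F hb hF I1 hf1 hI1p j, zero_mul]
  have h2 : Ideal.Quotient.mk (I0R R t I0 j) ((Ftor ⟨_, hu⟩).1) = 0 := by
    rw [hcompat ⟨_, hu⟩]
    exact hFu
  have h4 : (Ftor ⟨_, hu⟩).1 = 0 :=
    torKer (Kprin t I0 hg₀ j) (hg j).1 _ (Ftor ⟨_, hu⟩).2
      (Ideal.Quotient.eq_zero_iff_mem.mp h2)
  have h5 : (Ftor ⟨0, zero_mem _⟩).1 = 0 := by
    apply torKer (Kprin t I0 hg₀ j) (hg j).1 _ (Ftor ⟨0, zero_mem _⟩).2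
    apply Ideal.Quotient.eq_zero_iff_mem.mp
    rw [hcompat ⟨0, zero_mem _⟩, map_zero, map_zero]
  have h6 : Ftor ⟨_, hu⟩ = Ftor ⟨0, zero_mem _⟩ := Subtype.ext (h4.trans h5.symm)
  exact congrArg Subtype.val (hbij.1 h6)

end Stmt9Tower

namespace Stmt9Tower

open Stmt9Aux

variable {R : ℕ → Type u} [∀ i, CommRing (R i)] {t : ∀ i, R i →+* R (i + 1)} {I0 : Ideal (R 0)}
  {p : ℕ} {F : ∀ i, R (i + 1) ⧸ I0R R t I0 (i + 1) →+* R i ⧸ I0R R t I0 i}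

lemma main_lemma (hp : p.Prime) (hp0 : (p : R 0) ∈ I0)
    (hb : ∀ i, Function.Injective (tbar R t I0 i))
    (hF : ∀ i x, tbar R t I0 i (F i x) = x ^ p)
    (hd : ∀ i, Function.Surjective (F i))
    (I1 : Ideal (R 1)) {f1 : R 1} (hf1 : I1 = Ideal.span {f1})
    (hI1p : I1 ^ p = I0R R t I0 1)
    (hker : ∀ i, RingHom.ker (F i) =
      I1.map ((Ideal.Quotient.mk (I0R R t I0 (i + 1))).comp (chain1 R t i)))
    (hg : ∀ i, CondG R t I0 F i) {g₀ : R 0} (hg₀ : I0 = Ideal.span {g₀})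
    (i : ℕ) (ρ c τ : R (i + 1))
    (hτ : τ ∈ Itor (I0R R t I0 (i + 1)) (R (i + 1)))
    (heq : ρ ^ p = c * chain1 R t i f1 ^ p + τ) :
    ∃ s v, v ∈ Itor (I0R R t I0 (i + 1)) (R (i + 1)) ∧ ρ = s * chain1 R t i f1 + v := by
  have hp2 : 2 ≤ p := hp.two_le
  have hppos : 0 < p := hp.pos
  have hpm1 : p - 1 + 1 = p := by omega
  set f : R (i + 1) := chain1 R t i f1 with hfdef
  set f' : R (i + 1 + 1) := chain1 R t (i + 1) f1 with hf'def
  have hft : f' = t (i + 1) f := rfl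
  set mk1 := Ideal.Quotient.mk (I0R R t I0 (i + 1)) with hmk1
  set mk2 := Ideal.Quotient.mk (I0R R t I0 (i + 1 + 1)) with hmk2
  have hK : I0R R t I0 (i + 1) = Ideal.span {f ^ p} := Kspan t I0 I1 hf1 hI1p i
  have hK' : I0R R t I0 (i + 1 + 1) = Ideal.span {f' ^ p} := Kspan t I0 I1 hf1 hI1p (i + 1)
  have hfpK' : f' ^ p ∈ I0R R t I0 (i + 1 + 1) := by
    rw [hK']; exact Ideal.mem_span_singleton_self _
  have hpz : ((p : ℕ) : R (i + 1 + 1) ⧸ I0R R t I0 (i + 1 + 1)) = 0 := by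
    rw [← map_natCast mk2 p, hmk2, Ideal.Quotient.eq_zero_iff_mem]
    exact p_mem_K t I0 hp0 (i + 1 + 1)
  obtain ⟨Pc, hPc⟩ := hd (i + 1) (mk1 ρ)
  obtain ⟨P, hP⟩ := Ideal.Quotient.mk_surjective Pc
  rw [← hmk2] at hP
  rw [← hP] at hPc
  obtain ⟨Hc, hHc⟩ := hd (i + 1) (mk1 f)
  obtain ⟨H, hH⟩ := Ideal.Quotient.mk_surjective Hc
  rw [← hmk2] at hH
  rw [← hH] at hHc
  obtain ⟨Ftor, hbij, hcompat⟩ := (hg (i + 1)).2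
  obtain ⟨d2s, hd2s⟩ := hbij.2 ⟨τ, hτ⟩
  have hd₂T : d2s.1 ∈ Itor (I0R R t I0 (i + 1 + 1)) (R (i + 1 + 1)) := d2s.2
  have h3 : F (i + 1) (mk2 d2s.1) = mk1 τ := by
    have h := hcompat d2s
    rw [hd2s] at h
    exact h.symm
  have htb : ∀ x : R (i + 1), tbar R t I0 (i + 1) (mk1 x) = mk2 (t (i + 1) x) := by
    intro x
    rw [hmk1, hmk2, tbar_mk]
  have hPp : (mk2 P) ^ p = mk2 (t (i + 1) ρ) := by
    rw [← hF (i + 1) (mk2 P), hPc, htb]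
  have hHp : (mk2 H) ^ p = mk2 f' := by
    rw [← hF (i + 1) (mk2 H), hHc, htb, ← hft]
  have hd₂p : (mk2 d2s.1) ^ p = mk2 (t (i + 1) τ) := by
    rw [← hF (i + 1) (mk2 d2s.1), h3, htb]
  have hPpp : ((mk2 P) ^ p) ^ p = mk2 (t (i + 1) τ) := by
    rw [hPp, ← map_pow, ← map_pow (t (i + 1)) ρ p, heq, map_add, map_mul, map_pow, map_add]
    have hz1 : mk2 (t (i + 1) c * t (i + 1) f ^ p) = 0 := by
      rw [hmk2, Ideal.Quotient.eq_zero_iff_mem]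
      exact Ideal.mul_mem_left _ _ (by rw [← hft]; exact hfpK')
    rw [hz1, zero_add]
  have hfd₂ : f' * d2s.1 = 0 :=
    fT_zero t I0 F hb hF I1 hf1 hI1p hg hg₀ (i + 1) d2s.1 hd₂T
  -- pollution is killed by p-th power
  have hy0 : ((mk2 P) ^ p - mk2 d2s.1) ^ p = 0 := by
    rw [freshman_sub hp hpz, hPpp, hd₂p, sub_self]
  obtain ⟨z, hz⟩ := lemA t I0 F hb hF I1 hf1 hker (i + 1) _ hy0
  rw [← hf'def, ← hmk2] at hz
  have e2 : (mk2 P) ^ p = mk2 d2s.1 + z * mk2 f' := by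
    rw [← hz]; ring
  -- the H^(p-1) * P trick
  have hXp : ((mk2 H) ^ (p - 1) * mk2 P) ^ p = 0 := by
    have e1 : ((mk2 H) ^ (p - 1) * mk2 P) ^ p = ((mk2 H) ^ p) ^ (p - 1) * (mk2 P) ^ p := by
      rw [mul_pow, ← pow_mul, mul_comm (p - 1) p, pow_mul]
    rw [e1, hHp, e2, mul_add]
    have hfd₂' : (mk2 f') ^ (p - 1) * mk2 d2s.1 = 0 := by
      have e3 : f' ^ (p - 1) * d2s.1 = 0 := by
        have e4 : p - 1 = p - 2 + 1 := by omega
        rw [e4, pow_succ, mul_assoc, hfd₂, mul_zero]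
      rw [← map_pow, ← map_mul, e3, map_zero]
    have hfz : (mk2 f') ^ (p - 1) * (z * mk2 f') = 0 := by
      have e5 : (mk2 f') ^ (p - 1) * (z * mk2 f') = z * ((mk2 f') ^ (p - 1) * mk2 f') := by
        ring
      rw [e5, ← pow_succ, hpm1, ← map_pow, hmk2, Ideal.Quotient.eq_zero_iff_mem.mpr hfpK',
        mul_zero]
    rw [hfd₂', hfz, add_zero]
  obtain ⟨w, hw⟩ := lemA t I0 F hb hF I1 hf1 hker (i + 1) _ hXp
  rw [← hf'def, ← hmk2] at hw
  obtain ⟨w₀, hw₀⟩ := Ideal.Quotient.mk_surjective w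
  rw [← hmk2] at hw₀
  have h6 : (mk2 H) ^ (p - 1) * (mk2 P - mk2 H * w) = 0 := by
    have e6 : (mk2 H) ^ (p - 1) * (mk2 P - mk2 H * w)
        = ((mk2 H) ^ (p - 1) * mk2 P) - ((mk2 H) ^ (p - 1) * mk2 H) * w := by ring
    rw [e6, hw, ← pow_succ, hpm1, hHp]
    ring
  have h7 : mk2 f' * (mk2 P - mk2 H * w) = 0 := by
    have e7 : mk2 f' * (mk2 P - mk2 H * w)
        = mk2 H * ((mk2 H) ^ (p - 1) * (mk2 P - mk2 H * w)) := by
      rw [← mul_assoc, ← pow_succ', hpm1, hHp]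
    rw [e7, h6, mul_zero]
  have h8 : f' * (P - H * w₀) ∈ I0R R t I0 (i + 1 + 1) := by
    rw [← Ideal.Quotient.eq_zero_iff_mem, ← hmk2, map_mul, map_sub, map_mul, hw₀]
    exact h7
  rw [hK', Ideal.mem_span_singleton'] at h8
  obtain ⟨μ, hμ⟩ := h8
  have hfv' : f' * (P - H * w₀ - μ * f' ^ (p - 1)) = 0 := by
    have e8 : f' * (P - H * w₀ - μ * f' ^ (p - 1))
        = f' * (P - H * w₀) - μ * (f' ^ (p - 1) * f') := by ring
    rw [e8, ← hμ, ← pow_succ, hpm1]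
    ring
  have hv'T : (P - H * w₀ - μ * f' ^ (p - 1)) ∈ Itor (I0R R t I0 (i + 1 + 1)) (R (i + 1 + 1)) := by
    apply ann_mem_Itor hppos hK' (m := 1)
    rw [pow_one]
    exact hfv'
  have hFf' : F (i + 1) (mk2 f') = 0 := Fzero t I0 F hb hF I1 hf1 hI1p (i + 1)
  have hPdec : P = H * w₀ + μ * f' ^ (p - 1) + (P - H * w₀ - μ * f' ^ (p - 1)) := by ring
  obtain ⟨vv, hvvT, hvveq⟩ : ∃ vv, vv ∈ Itor (I0R R t I0 (i + 1)) (R (i + 1)) ∧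
      mk1 vv = F (i + 1) (mk2 (P - H * w₀ - μ * f' ^ (p - 1))) :=
    ⟨(Ftor ⟨_, hv'T⟩).1, (Ftor ⟨_, hv'T⟩).2, hcompat ⟨_, hv'T⟩⟩
  have h9 : mk1 ρ = mk1 f * F (i + 1) (mk2 w₀) + mk1 vv := by
    rw [← hPc]
    conv_lhs => rw [hPdec]
    simp only [map_add, map_mul, map_pow]
    rw [hHc, hFf', ← hvveq]
    rw [zero_pow (by omega : p - 1 ≠ 0), mul_zero, add_zero]
  obtain ⟨w₁, hw₁⟩ := Ideal.Quotient.mk_surjective (F (i + 1) (mk2 w₀))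
  rw [← hmk1] at hw₁
  have h10 : ρ - (w₁ * f + vv) ∈ I0R R t I0 (i + 1) := by
    rw [← Ideal.Quotient.eq_zero_iff_mem, ← hmk1, map_sub, map_add, map_mul, hw₁, h9]
    ring
  rw [hK, Ideal.mem_span_singleton'] at h10
  obtain ⟨ν, hν⟩ := h10
  refine ⟨w₁ + ν * f ^ (p - 1), vv, hvvT, ?_⟩
  have e9 : (w₁ + ν * f ^ (p - 1)) * f = w₁ * f + ν * (f ^ (p - 1) * f) := by ring
  rw [e9, ← pow_succ, hpm1]
  linear_combination -hν

end Stmt9Tower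

open Stmt9Aux Stmt9Tower

/-- **Proposition 3.4 (2).** For a preperfectoid tower, the injection
`Rᵢ₊₁/I₁Rᵢ₊₁ ↪ Rᵢ₊₁/I₀Rᵢ₊₁` induced by the absolute Frobenius extends to an injection of
graded rings `gr_{I₁}(Rᵢ₊₁) ↪ gr_{I₀}(Rᵢ₊₁)`. -/
theorem stmt9
    (p : ℕ) (hp : p.Prime)
    {R : ℕ → Type u} [∀ i, CommRing (R i)] (t : ∀ i, R i →+* R (i + 1))
    (I0 : Ideal (R 0))
    (hp0 : (p : R 0) ∈ I0)
    (hb : ∀ i, Function.Injective (tbar R t I0 i))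
    (F : ∀ i, R (i + 1) ⧸ I0R R t I0 (i + 1) →+* R i ⧸ I0R R t I0 i)
    (hF : ∀ i x, tbar R t I0 i (F i x) = x ^ p)
    (hd : ∀ i, Function.Surjective (F i))
    (hI0 : I0.IsPrincipal)
    (I1 : Ideal (R 1)) (hI1 : I1.IsPrincipal)
    (hI1p : I1 ^ p = I0R R t I0 1)
    (hker : ∀ i, RingHom.ker (F i) =
      I1.map ((Ideal.Quotient.mk (I0R R t I0 (i + 1))).comp (chain1 R t i)))
    (hg : ∀ i, CondG R t I0 F i) :
    ∀ i, ∃ g : ∀ n, GrPiece (I1R R t I1 i) n →+ GrPiece (I0R R t I0 (i + 1)) n,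
      (∀ n, Function.Injective (g n)) ∧
      GradedMul (I1R R t I1 i) (I0R R t I0 (i + 1)) g ∧
      ∀ x : R (i + 1),
        g 0 (grMk (I1R R t I1 i) 0 x (mem_pow_zero _ x)) =
          grMk (I0R R t I0 (i + 1)) 0 (x ^ p) (mem_pow_zero _ (x ^ p)) := by
  intro i
  obtain ⟨f1, hf1'⟩ := hI1.principal
  have hf1 : I1 = Ideal.span {f1} := hf1'
  obtain ⟨g₀, hg₀'⟩ := hI0.principal
  have hg₀ : I0 = Ideal.span {g₀} := hg₀'
  have hJ : I1R R t I1 i = Ideal.span {chain1 R t i f1} := Jspan t I1 hf1 i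
  have hK : I0R R t I0 (i + 1) = Ideal.span {chain1 R t i f1 ^ p} :=
    Kspan t I0 I1 hf1 hI1p i
  have hJK : I0R R t I0 (i + 1) = (I1R R t I1 i) ^ p := by
    rw [hK, hJ, Ideal.span_singleton_pow]
  have hpJ : (p : R (i + 1)) ∈ I0R R t I0 (i + 1) := p_mem_K t I0 hp0 (i + 1)
  refine ⟨fun n => AddMonoidHom.mk' (frobFun hp hJK hpJ n) (frobFun_add hp hJK hpJ n),
    ?_, ?_, ?_⟩
  · -- injectivity
    intro n
    rw [injective_iff_map_eq_zero]
    intro q hq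
    obtain ⟨x, hx, rfl⟩ := grPiece_exists _ n q
    have hq' : grMk (I0R R t I0 (i + 1)) n (x ^ p) (frob_mem hJK hx) = 0 := hq
    rw [grMk_eq_zero_iff] at hq'
    rw [grMk_eq_zero_iff]
    cases n with
    | zero =>
      rw [pow_one] at hq'
      rw [pow_one]
      have hz : (Ideal.Quotient.mk (I0R R t I0 (i + 1)) x) ^ p = 0 := by
        rw [← map_pow, Ideal.Quotient.eq_zero_iff_mem]
        exact hq'
      obtain ⟨w, hw⟩ := lemA t I0 F hb hF I1 hf1 hker i _ hz
      obtain ⟨w₀, hw₀⟩ := Ideal.Quotient.mk_surjective w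
      have hmem : x - w₀ * chain1 R t i f1 ∈ I0R R t I0 (i + 1) := by
        rw [← Ideal.Quotient.eq_zero_iff_mem, map_sub, map_mul, hw₀, ← hw, sub_self]
      have hKJ : I0R R t I0 (i + 1) ≤ Ideal.span {chain1 R t i f1} := by
        rw [hK]
        apply Ideal.span_le.mpr
        intro a ha
        rw [Set.mem_singleton_iff] at ha
        subst ha
        have e4 : p = (p - 1) + 1 := by have := hp.pos; omega
        rw [e4, pow_succ]
        exact Ideal.mul_mem_left _ _ (Ideal.mem_span_singleton_self _)
      have hx2 : x = (x - w₀ * chain1 R t i f1) + w₀ * chain1 R t i f1 := by ring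
      rw [hJ, hx2]
      exact add_mem (hKJ hmem)
        (Ideal.mul_mem_left _ _ (Ideal.mem_span_singleton_self _))
    | succ m =>
      rw [hJ, Ideal.span_singleton_pow, Ideal.mem_span_singleton'] at hx
      obtain ⟨r, hr⟩ := hx
      rw [hK, Ideal.span_singleton_pow, Ideal.mem_span_singleton'] at hq'
      obtain ⟨c, hc⟩ := hq'
      have e1 : x ^ p = r ^ p * chain1 R t i f1 ^ (p * (m + 1)) := by
        rw [← hr, mul_pow, ← pow_mul, Nat.mul_comm]
      have e2 : c * chain1 R t i f1 ^ (p * (m + 1)) * chain1 R t i f1 ^ p = x ^ p := by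
        rw [← hc, ← pow_mul]
        have e : p * (m + 1) + p = p * (m + 1 + 1) := by ring
        rw [mul_assoc, ← pow_add, e]
      have key : chain1 R t i f1 ^ (p * (m + 1)) * (r ^ p - c * chain1 R t i f1 ^ p) = 0 := by
        linear_combination -e1 - e2
      have hτT : r ^ p - c * chain1 R t i f1 ^ p
          ∈ Itor (I0R R t I0 (i + 1)) (R (i + 1)) :=
        ann_mem_Itor hp.pos hK key
      obtain ⟨s, v, hvT, hsv⟩ := main_lemma hp hp0 hb hF hd I1 hf1 hI1p hker hg hg₀ i
        r c (r ^ p - c * chain1 R t i f1 ^ p) hτT (by ring)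
      have hfv : chain1 R t i f1 * v = 0 :=
        fT_zero t I0 F hb hF I1 hf1 hI1p hg hg₀ i v hvT
      have hxeq : x = s * chain1 R t i f1 ^ (m + 1 + 1) := by
        rw [← hr, hsv]
        have e3 : v * chain1 R t i f1 ^ (m + 1) = 0 := by
          rw [pow_succ', ← mul_assoc, mul_comm v, hfv, zero_mul]
        calc (s * chain1 R t i f1 + v) * chain1 R t i f1 ^ (m + 1)
            = s * chain1 R t i f1 ^ (m + 1 + 1) + v * chain1 R t i f1 ^ (m + 1) := by ring
          _ = s * chain1 R t i f1 ^ (m + 1 + 1) := by rw [e3, add_zero]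
      rw [hJ, Ideal.span_singleton_pow, Ideal.mem_span_singleton']
      exact ⟨s, hxeq.symm⟩
  · -- multiplicativity
    intro m n x y hx hy u v hu hv hgx hgy
    have h1 : x ^ p - u ∈ (I0R R t I0 (i + 1)) ^ (m + 1) :=
      (grMk_eq_iff _ _ (frob_mem hJK hx) hu).mp hgx
    have h2 : y ^ p - v ∈ (I0R R t I0 (i + 1)) ^ (n + 1) :=
      (grMk_eq_iff _ _ (frob_mem hJK hy) hv).mp hgy
    show grMk (I0R R t I0 (i + 1)) (m + n) ((x * y) ^ p)
        (frob_mem hJK (mul_mem_pow_add hx hy)) = grMk _ (m + n) (u * v) _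
    rw [grMk_eq_iff]
    have key : (x * y) ^ p - u * v = x ^ p * (y ^ p - v) + v * (x ^ p - u) := by ring
    have t1 : x ^ p * (y ^ p - v) ∈ (I0R R t I0 (i + 1)) ^ (m + (n + 1)) :=
      mul_mem_pow_add (frob_mem hJK hx) h2
    have t2 : v * (x ^ p - u) ∈ (I0R R t I0 (i + 1)) ^ (n + (m + 1)) :=
      mul_mem_pow_add hv h1
    have e : n + (m + 1) = m + n + 1 := by omega
    have e' : m + (n + 1) = m + n + 1 := by omega
    rw [e] at t2
    rw [e'] at t1
    rw [key]
    exact add_mem t1 t2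
  · -- degree-0 compatibility
    intro x
    rfl
end Preamble
end

section
/- Let R = {R_i, t_i}_{i≥0} be a preperfectoid tower arising from a pair (R, I_0). Fix i ≥ 0 and suppose R_i and R_{i+1} are I_0-adically separated, i.e., ∩_{n≥0} I_0^n R_i = 0 and ∩_{n≥0} I_0^n R_{i+1} = 0. Then the transition map t_i : R_i → R_{i+1} is injective. -/
open Submodule

section Preamble

variable {A : Type*} [CommRing A]

universe u

section MyAux

variable {R : ℕ → Type u} [∀ i, CommRing (R i)] (t : ∀ i, R i →+* R (i + 1))
  (I0 : Ideal (R 0))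

lemma my_chain_succ (j : ℕ) (x : R 0) :
    chain R t (j + 1) x = t j (chain R t j x) := rfl

lemma my_tbar_mk (j : ℕ) (x : R j) :
    tbar R t I0 j (Ideal.Quotient.mk (I0R R t I0 j) x)
      = Ideal.Quotient.mk (I0R R t I0 (j + 1)) (t j x) := by
  unfold tbar
  exact Ideal.quotientMap_mk

lemma my_chain1_comp (j : ℕ) :
    (chain1 R t j).comp (chain R t 1) = chain R t (j + 1) := by
  induction j with
  | zero => ext x; rfl
  | succ j ih =>
      show ((t (j + 1)).comp (chain1 R t j)).comp (chain R t 1) = _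
      rw [RingHom.comp_assoc, ih]
      rfl

lemma my_I0R_span {f0 : R 0} (hf0 : I0 = Ideal.span {f0}) (j : ℕ) :
    I0R R t I0 j = Ideal.span {chain R t j f0} := by
  unfold I0R
  rw [hf0, Ideal.map_span, Set.image_singleton]

lemma my_I1R_span {I1 : Ideal (R 1)} {b1 : R 1} (hb1 : I1 = Ideal.span {b1}) (j : ℕ) :
    I1R R t I1 j = Ideal.span {chain1 R t j b1} := by
  unfold I1R
  rw [hb1, Ideal.map_span, Set.image_singleton]

lemma my_I1R_pow (p : ℕ) {I1 : Ideal (R 1)} (hI1p : I1 ^ p = I0R R t I0 1) (j : ℕ) :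
    (I1R R t I1 j) ^ p = I0R R t I0 (j + 1) := by
  unfold I1R
  rw [← Ideal.map_pow, hI1p]
  unfold I0R
  rw [Ideal.map_map, my_chain1_comp]

lemma my_mem_of_t_mem {j : ℕ} (hb : Function.Injective (tbar R t I0 j)) {x : R j}
    (h : t j x ∈ I0R R t I0 (j + 1)) : x ∈ I0R R t I0 j := by
  have h1 : tbar R t I0 j (Ideal.Quotient.mk (I0R R t I0 j) x) = tbar R t I0 j 0 := by
    rw [map_zero, my_tbar_mk, Ideal.Quotient.eq_zero_iff_mem]
    exact h
  have h2 := hb h1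
  rwa [Ideal.Quotient.eq_zero_iff_mem] at h2

end MyAux

section MyTor

variable {A : Type u} [CommRing A]

lemma my_mem_Itor {J : Ideal A} {x : A} :
    x ∈ Itor J A ↔ ∀ a ∈ J, ∃ n : ℕ, a ^ n * x = 0 := by
  have : x ∈ Itor J A ↔ ∀ a ∈ J, ∃ n : ℕ, a ^ n • x = 0 := Iff.rfl
  rw [this]
  simp only [smul_eq_mul]

lemma my_tor_span {J : Ideal A} {g : A} (hJ : J = Ideal.span {g})
    {x : A} (h : ∃ n : ℕ, g ^ n * x = 0) : x ∈ Itor J A := by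
  rw [my_mem_Itor]
  intro a ha
  rw [hJ] at ha
  obtain ⟨c, hc⟩ := Ideal.mem_span_singleton.mp ha
  obtain ⟨n, hn⟩ := h
  refine ⟨n, ?_⟩
  calc a ^ n * x = c ^ n * (g ^ n * x) := by rw [hc]; ring
  _ = 0 := by rw [hn, mul_zero]

lemma my_tor_pow {J : Ideal A} {g : A} (hJ : J = Ideal.span {g})
    {x : A} (h : x ∈ Itor J A) : ∃ n : ℕ, g ^ n * x = 0 := by
  rw [my_mem_Itor] at h
  exact h g (hJ ▸ Ideal.mem_span_singleton_self g)

lemma my_tor_cap {J : Ideal A} {g : A} (hJ : J = Ideal.span {g})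
    (hg1 : ∀ a ∈ J, ∀ x ∈ Itor J A, a * x = 0)
    {x : A} (hx : x ∈ Itor J A) (hxJ : x ∈ J) : x = 0 := by
  have hgJ : g ∈ J := hJ ▸ Ideal.mem_span_singleton_self g
  rw [hJ] at hxJ
  obtain ⟨c, hc⟩ := Ideal.mem_span_singleton.mp hxJ
  have hgx : g * x = 0 := hg1 g hgJ x hx
  have hc_tor : c ∈ Itor J A := by
    rw [my_mem_Itor]
    intro a ha
    rw [hJ] at ha
    obtain ⟨d, hd⟩ := Ideal.mem_span_singleton.mp ha
    refine ⟨2, ?_⟩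
    calc a ^ 2 * c = d ^ 2 * g * (g * c) := by rw [hd]; ring
    _ = d ^ 2 * g * x := by rw [hc]
    _ = d ^ 2 * (g * x) := by ring
    _ = 0 := by rw [hgx, mul_zero]
  have h0 : g * c = 0 := hg1 g hgJ c hc_tor
  rw [hc, h0]

lemma my_freshman {p : ℕ} (hp : p.Prime) {J : Ideal A}
    (hpJ : (p : A) ∈ J) (hg1 : ∀ a ∈ J, ∀ x ∈ Itor J A, a * x = 0)
    (X w : A) (hw : w ∈ Itor J A) :
    (X + w) ^ p = X ^ p + w ^ p := by
  have hpw : (p : A) * w = 0 := hg1 _ hpJ _ hw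
  rw [add_pow, Finset.sum_range_succ]
  have hmid : ∀ k ∈ Finset.range p, X ^ k * w ^ (p - k) * (p.choose k : A)
      = if k = 0 then w ^ p else 0 := by
    intro k hk
    have hkp : k < p := Finset.mem_range.mp hk
    rcases eq_or_ne k 0 with h0 | h0
    · subst h0; simp
    · rw [if_neg h0]
      obtain ⟨m, hm⟩ := hp.dvd_choose_self h0 hkp
      have h1 : w ^ (p - k) = w ^ (p - k - 1) * w := by
        rw [← pow_succ]
        congr 1
        omega
      rw [hm, h1]
      push_cast
      calc X ^ k * (w ^ (p - k - 1) * w) * ((p : A) * (m : A))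
          = X ^ k * w ^ (p - k - 1) * (m : A) * ((p : A) * w) := by ring
        _ = 0 := by rw [hpw, mul_zero]
  rw [Finset.sum_congr rfl hmid, Finset.sum_ite_eq' (Finset.range p) 0 (fun _ => w ^ p),
    if_pos (Finset.mem_range.mpr hp.pos), Nat.sub_self, pow_zero, mul_one, Nat.choose_self,
    Nat.cast_one, mul_one, add_comm]

end MyTor

section MyKey

variable {R : ℕ → Type u} [∀ i, CommRing (R i)]

/-- torsion is mapped to torsion by the transition maps. -/
lemma my_tor_map (t : ∀ i, R i →+* R (i + 1)) (I0 : Ideal (R 0))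
    {f0 : R 0} (hf0 : I0 = Ideal.span {f0}) (j : ℕ) {x : R j}
    (hx : x ∈ Itor (I0R R t I0 j) (R j)) :
    t j x ∈ Itor (I0R R t I0 (j + 1)) (R (j + 1)) := by
  obtain ⟨m, hm⟩ := my_tor_pow (my_I0R_span t I0 hf0 j) hx
  apply my_tor_span (my_I0R_span t I0 hf0 (j + 1))
  refine ⟨m, ?_⟩
  rw [my_chain_succ, ← map_pow, ← map_mul, hm, map_zero]

/-- elements of `I₁Rⱼ₊₁` kill `I₀`-torsion. -/
lemma my_I1_kills (t : ∀ i, R i →+* R (i + 1)) (I0 : Ideal (R 0))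
    (F : ∀ i, R (i + 1) ⧸ I0R R t I0 (i + 1) →+* R i ⧸ I0R R t I0 i)
    (I1 : Ideal (R 1))
    (hker : ∀ i, RingHom.ker (F i) =
      I1.map ((Ideal.Quotient.mk (I0R R t I0 (i + 1))).comp (chain1 R t i)))
    (hg : ∀ i, CondG R t I0 F i)
    {f0 : R 0} (hf0 : I0 = Ideal.span {f0})
    (j : ℕ) {ρ : R (j + 1)} (hρ : ρ ∈ I1R R t I1 j)
    {x : R (j + 1)} (hx : x ∈ Itor (I0R R t I0 (j + 1)) (R (j + 1))) :
    ρ * x = 0 := by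
  obtain ⟨hg1j, Ftor, hFbij, hFcomp⟩ := hg j
  have hρx_tor : ρ * x ∈ Itor (I0R R t I0 (j + 1)) (R (j + 1)) := by
    have h := (Itor (I0R R t I0 (j + 1)) (R (j + 1))).smul_mem ρ hx
    rwa [smul_eq_mul] at h
  have hFρ : F j (Ideal.Quotient.mk (I0R R t I0 (j + 1)) ρ) = 0 := by
    rw [← RingHom.mem_ker, hker j]
    have h : Ideal.Quotient.mk (I0R R t I0 (j + 1)) ρ
        ∈ (I1.map (chain1 R t j)).map (Ideal.Quotient.mk (I0R R t I0 (j + 1))) :=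
      Ideal.mem_map_of_mem _ hρ
    rwa [Ideal.map_map] at h
  have hz : ∀ (τ : Itor (I0R R t I0 (j + 1)) (R (j + 1))),
      Ideal.Quotient.mk (I0R R t I0 j) (Ftor τ).1 = 0 → (Ftor τ).1 = 0 := by
    intro τ hτ
    rw [Ideal.Quotient.eq_zero_iff_mem] at hτ
    exact my_tor_cap (my_I0R_span t I0 hf0 j) hg1j (Ftor τ).2 hτ
  have h2 : (Ftor ⟨ρ * x, hρx_tor⟩).1 = 0 := by
    apply hz
    rw [hFcomp]
    show F j (Ideal.Quotient.mk (I0R R t I0 (j + 1)) (ρ * x)) = 0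
    rw [map_mul, map_mul, hFρ, zero_mul]
  have h3 : (Ftor ⟨0, Submodule.zero_mem _⟩).1 = 0 := by
    apply hz
    rw [hFcomp]
    show F j (Ideal.Quotient.mk (I0R R t I0 (j + 1)) 0) = 0
    rw [map_zero, map_zero]
  have h4 : (⟨ρ * x, hρx_tor⟩ : Itor (I0R R t I0 (j + 1)) (R (j + 1)))
      = ⟨0, Submodule.zero_mem _⟩ :=
    hFbij.injective (Subtype.ext (h2.trans h3.symm))
  exact congrArg Subtype.val h4

/-- the torsion root lemma: `t (j+1) y` has a torsion `p`-th root. -/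
lemma my_root (p : ℕ) (hp : p.Prime) (t : ∀ i, R i →+* R (i + 1)) (I0 : Ideal (R 0))
    (F : ∀ i, R (i + 1) ⧸ I0R R t I0 (i + 1) →+* R i ⧸ I0R R t I0 i)
    (hF : ∀ i x, tbar R t I0 i (F i x) = x ^ p)
    (hg : ∀ i, CondG R t I0 F i)
    {f0 : R 0} (hf0 : I0 = Ideal.span {f0})
    (j : ℕ) {y : R (j + 1)} (hy : y ∈ Itor (I0R R t I0 (j + 1)) (R (j + 1))) :
    ∃ w : R (j + 2), w ∈ Itor (I0R R t I0 (j + 2)) (R (j + 2)) ∧ t (j + 1) y = w ^ p := by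
  obtain ⟨hg1, Ftor, hFbij, hFcomp⟩ := hg (j + 1)
  obtain ⟨w, hw⟩ := hFbij.surjective ⟨y, hy⟩
  refine ⟨w.1, w.2, ?_⟩
  have h1 : Ideal.Quotient.mk (I0R R t I0 (j + 1)) y
      = F (j + 1) (Ideal.Quotient.mk (I0R R t I0 (j + 2)) w.1) := by
    rw [← hFcomp w, hw]
  have h2 := hF (j + 1) (Ideal.Quotient.mk (I0R R t I0 (j + 2)) w.1)
  rw [← h1, my_tbar_mk] at h2
  have h3 : Ideal.Quotient.mk (I0R R t I0 (j + 2)) (t (j + 1) y)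
      = Ideal.Quotient.mk (I0R R t I0 (j + 2)) (w.1 ^ p) := by
    rw [h2, map_pow]
  have h4 : t (j + 1) y - w.1 ^ p ∈ I0R R t I0 (j + 2) := Ideal.Quotient.eq.mp h3
  have h5 : t (j + 1) y ∈ Itor (I0R R t I0 (j + 2)) (R (j + 2)) :=
    my_tor_map t I0 hf0 (j + 1) hy
  have h6 : w.1 ^ p ∈ Itor (I0R R t I0 (j + 2)) (R (j + 2)) := by
    have hps : p = (p - 1) + 1 := by have := hp.pos; omega
    rw [hps, pow_succ]
    have h := (Itor (I0R R t I0 (j + 2)) (R (j + 2))).smul_mem (w.1 ^ (p - 1)) w.2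
    rwa [smul_eq_mul] at h
  have h7 : t (j + 1) y - w.1 ^ p ∈ Itor (I0R R t I0 (j + 2)) (R (j + 2)) :=
    Submodule.sub_mem _ h5 h6
  have h8 := my_tor_cap (my_I0R_span t I0 hf0 (j + 2)) (hg (j + 2)).1 h7 h4
  exact sub_eq_zero.mp h8

end MyKey

section MyOmega

variable {R : ℕ → Type u} [∀ i, CommRing (R i)]

/-- **Key lemma**: if `t i u` is torsion, then `u` is torsion plus an element of `I₀Rᵢ`. -/
lemma my_omega (p : ℕ) (hp : p.Prime) (t : ∀ i, R i →+* R (i + 1)) (I0 : Ideal (R 0))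
    (hp0 : (p : R 0) ∈ I0)
    (hb : ∀ i, Function.Injective (tbar R t I0 i))
    (F : ∀ i, R (i + 1) ⧸ I0R R t I0 (i + 1) →+* R i ⧸ I0R R t I0 i)
    (hF : ∀ i x, tbar R t I0 i (F i x) = x ^ p)
    (hd : ∀ i, Function.Surjective (F i))
    {f0 : R 0} (hf0 : I0 = Ideal.span {f0})
    (I1 : Ideal (R 1)) {b1 : R 1} (hb1 : I1 = Ideal.span {b1})
    (hI1p : I1 ^ p = I0R R t I0 1)
    (hker : ∀ i, RingHom.ker (F i) =
      I1.map ((Ideal.Quotient.mk (I0R R t I0 (i + 1))).comp (chain1 R t i)))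
    (hg : ∀ i, CondG R t I0 F i)
    (i : ℕ) (u : R i) (hu : t i u ∈ Itor (I0R R t I0 (i + 1)) (R (i + 1))) :
    ∃ σ, σ ∈ Itor (I0R R t I0 i) (R i) ∧ u - σ ∈ I0R R t I0 i := by
  have hpm : ((p : ℕ) : R (i + 2)) ∈ I0R R t I0 (i + 2) := by
    have h : chain R t (i + 2) ((p : ℕ) : R 0) ∈ I0R R t I0 (i + 2) :=
      Ideal.mem_map_of_mem _ hp0
    rwa [map_natCast] at h
  -- choose V with F i (mk V) = mk u
  obtain ⟨ξ, hξ⟩ := hd i (Ideal.Quotient.mk (I0R R t I0 i) u)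
  obtain ⟨V, rfl⟩ := Ideal.Quotient.mk_surjective ξ
  -- V^p ≡ t i u mod I₀Rᵢ₊₁
  have h1 : Ideal.Quotient.mk (I0R R t I0 (i + 1)) (V ^ p)
      = Ideal.Quotient.mk (I0R R t I0 (i + 1)) (t i u) := by
    have h2 := hF i (Ideal.Quotient.mk (I0R R t I0 (i + 1)) V)
    rw [hξ, my_tbar_mk] at h2
    rw [map_pow]
    exact h2.symm
  have h3 : V ^ p - t i u ∈ I0R R t I0 (i + 1) := Ideal.Quotient.eq.mp h1
  rw [my_I0R_span t I0 hf0 (i + 1)] at h3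
  obtain ⟨E, hE⟩ := Ideal.mem_span_singleton.mp h3
  -- torsion root w of t (i+1) (t i u)
  obtain ⟨w, hw_tor, hwp⟩ := my_root p hp t I0 F hF hg hf0 i hu
  -- X := t (i+1) V - w  satisfies X^p ∈ I₀Rᵢ₊₂
  set X := t (i + 1) V - w with hX
  have hXw : X + w = t (i + 1) V := by rw [hX]; ring
  have hfresh : (X + w) ^ p = X ^ p + w ^ p :=
    my_freshman hp hpm (hg (i + 2)).1 X w hw_tor
  have hVpy : V ^ p = t i u + chain R t (i + 1) f0 * E := by
    rw [← hE]; ring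
  have hXp : X ^ p = chain R t (i + 2) f0 * t (i + 1) E := by
    have h4 : (t (i + 1) V) ^ p = X ^ p + w ^ p := by rw [← hXw, hfresh]
    have h5 : (t (i + 1) V) ^ p = t (i + 1) (V ^ p) := (map_pow _ _ _).symm
    have h6 : t (i + 1) (V ^ p)
        = t (i + 1) (t i u) + chain R t (i + 2) f0 * t (i + 1) E := by
      rw [hVpy, map_add, map_mul]
      rfl
    have h7 : X ^ p = t (i + 1) (V ^ p) - w ^ p := by rw [← h5, h4]; ring
    rw [h7, h6, hwp]
    ring
  have hXpA : X ^ p ∈ I0R R t I0 (i + 2) := by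
    rw [hXp]
    refine Ideal.mul_mem_right _ _ ?_
    rw [my_I0R_span t I0 hf0 (i + 2)]
    exact Ideal.mem_span_singleton_self _
  -- X ∈ I₁Rᵢ₊₂ (as the ideal I1R R t I1 (i+1))
  have h8 : F (i + 1) (Ideal.Quotient.mk (I0R R t I0 (i + 2)) X) = 0 := by
    apply hb (i + 1)
    rw [map_zero, hF (i + 1), ← map_pow, Ideal.Quotient.eq_zero_iff_mem]
    exact hXpA
  have h9 : X ∈ I1R R t I1 (i + 1) := by
    have h10 : Ideal.Quotient.mk (I0R R t I0 (i + 2)) X ∈ RingHom.ker (F (i + 1)) :=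
      RingHom.mem_ker.mpr h8
    rw [hker (i + 1), ← Ideal.map_map] at h10
    rw [Ideal.mem_quotient_iff_mem_sup] at h10
    have h12 : I0R R t I0 (i + 2) ≤ I1.map (chain1 R t (i + 1)) := by
      have := my_I1R_pow t I0 p hI1p (i + 1)
      unfold I1R at this
      rw [← this]
      exact Ideal.pow_le_self hp.ne_zero
    have h13 : X ∈ I1.map (chain1 R t (i + 1)) := by
      rwa [sup_eq_left.mpr h12] at h10
    unfold I1R
    exact h13
  rw [my_I1R_span t hb1 (i + 1)] at h9
  obtain ⟨c, hc⟩ := Ideal.mem_span_singleton.mp h9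
  -- the key multiplication: t (i+1) (b^(p-1) * V) ∈ I₀Rᵢ₊₂
  set b := chain1 R t i b1 with hb_def
  have hb2 : t (i + 1) b = chain1 R t (i + 1) b1 := rfl
  have hb2mem : chain1 R t (i + 1) b1 ∈ I1R R t I1 (i + 1) := by
    rw [my_I1R_span t hb1 (i + 1)]
    exact Ideal.mem_span_singleton_self _
  have hkill : chain1 R t (i + 1) b1 * w = 0 :=
    my_I1_kills t I0 F I1 hker hg hf0 (i + 1) hb2mem hw_tor
  have hmain : t (i + 1) (b ^ (p - 1) * V) ∈ I0R R t I0 (i + 2) := by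
    rw [map_mul, map_pow, hb2]
    have htV : t (i + 1) V = X + w := hXw.symm
    rw [htV, mul_add]
    apply Ideal.add_mem
    · rw [hc]
      have hps : p = (p - 1) + 1 := by have := hp.pos; omega
      have hbp2 : chain1 R t (i + 1) b1 ^ p
          = chain1 R t (i + 1) b1 * chain1 R t (i + 1) b1 ^ (p - 1) := by
        conv_lhs => rw [hps]
        rw [pow_succ]
        ring
      have harr : chain1 R t (i + 1) b1 ^ (p - 1) * (chain1 R t (i + 1) b1 * c)
          = chain1 R t (i + 1) b1 ^ p * c := by
        rw [hbp2]
        ring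
      rw [harr]
      refine Ideal.mul_mem_right _ _ ?_
      have := my_I1R_pow t I0 p hI1p (i + 1)
      rw [← this, my_I1R_span t hb1 (i + 1), Ideal.span_singleton_pow]
      exact Ideal.mem_span_singleton_self _
    · have hp2 : p - 1 = (p - 2) + 1 := by
        have := hp.two_le
        omega
      rw [hp2, pow_succ, mul_assoc, hkill, mul_zero]
      exact Ideal.zero_mem _
  have hdiv : b ^ (p - 1) * V ∈ I0R R t I0 (i + 1) :=
    my_mem_of_t_mem t I0 (hb (i + 1)) hmain
  have hA1 : I0R R t I0 (i + 1) = Ideal.span {b ^ p} := by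
    rw [← my_I1R_pow t I0 p hI1p i, my_I1R_span t hb1 i, Ideal.span_singleton_pow]
  rw [hA1] at hdiv
  obtain ⟨h', hh⟩ := Ideal.mem_span_singleton.mp hdiv
  -- χ := V - b * h' is torsion
  have hps : p = (p - 1) + 1 := by have := hp.pos; omega
  have hbp : b ^ p = b * b ^ (p - 1) := by
    conv_lhs => rw [hps]
    rw [pow_succ]
    ring
  have hann : b ^ (p - 1) * (V - b * h') = 0 := by
    have harr2 : b ^ (p - 1) * (b * h') = b ^ p * h' := by
      rw [hbp]; ring
    rw [mul_sub, hh, harr2, sub_self]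
  have hχ_tor : V - b * h' ∈ Itor (I0R R t I0 (i + 1)) (R (i + 1)) := by
    rw [my_mem_Itor]
    intro α hα
    rw [hA1] at hα
    obtain ⟨d, hd⟩ := Ideal.mem_span_singleton.mp hα
    refine ⟨1, ?_⟩
    have harr3 : α ^ 1 * (V - b * h') = d * b * (b ^ (p - 1) * (V - b * h')) := by
      rw [hd, hbp]
      ring
    rw [harr3, hann, mul_zero]
  -- descend: mk u = F i (mk χ)
  have hmkb : F i (Ideal.Quotient.mk (I0R R t I0 (i + 1)) b) = 0 := by
    rw [← RingHom.mem_ker, hker i]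
    exact Ideal.mem_map_of_mem _ (hb1 ▸ Ideal.mem_span_singleton_self b1)
  have hmku : Ideal.Quotient.mk (I0R R t I0 i) u
      = F i (Ideal.Quotient.mk (I0R R t I0 (i + 1)) (V - b * h')) := by
    have hVdec : Ideal.Quotient.mk (I0R R t I0 (i + 1)) V
        = Ideal.Quotient.mk (I0R R t I0 (i + 1)) (V - b * h')
          + Ideal.Quotient.mk (I0R R t I0 (i + 1)) b
            * Ideal.Quotient.mk (I0R R t I0 (i + 1)) h' := by
      rw [← map_mul, ← map_add]
      congr 1
      ring
    rw [← hξ, hVdec, map_add, map_mul, hmkb, zero_mul, add_zero]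
  obtain ⟨hg1i, Ftor, hFbij, hFcomp⟩ := hg i
  refine ⟨(Ftor ⟨V - b * h', hχ_tor⟩).1, (Ftor ⟨V - b * h', hχ_tor⟩).2, ?_⟩
  apply Ideal.Quotient.eq.mp
  rw [hFcomp ⟨V - b * h', hχ_tor⟩]
  exact hmku

end MyOmega


/-- **Corollary 3.5 (1).** For a preperfectoid tower with `Rᵢ` and `Rᵢ₊₁`
`I₀`-adically separated, the transition map `tᵢ : Rᵢ → Rᵢ₊₁` is injective. -/
theorem stmt10
    (p : ℕ) (hp : p.Prime)
    {R : ℕ → Type u} [∀ i, CommRing (R i)] (t : ∀ i, R i →+* R (i + 1))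
    (I0 : Ideal (R 0))
    (hp0 : (p : R 0) ∈ I0)
    (hb : ∀ i, Function.Injective (tbar R t I0 i))
    (F : ∀ i, R (i + 1) ⧸ I0R R t I0 (i + 1) →+* R i ⧸ I0R R t I0 i)
    (hF : ∀ i x, tbar R t I0 i (F i x) = x ^ p)
    (hd : ∀ i, Function.Surjective (F i))
    (hI0 : I0.IsPrincipal)
    (I1 : Ideal (R 1)) (hI1 : I1.IsPrincipal)
    (hI1p : I1 ^ p = I0R R t I0 1)
    (hker : ∀ i, RingHom.ker (F i) =
      I1.map ((Ideal.Quotient.mk (I0R R t I0 (i + 1))).comp (chain1 R t i)))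
    (hg : ∀ i, CondG R t I0 F i)
    (i : ℕ)
    (hsep₁ : (⨅ n : ℕ, (I0R R t I0 i) ^ n) = ⊥)
    (hsep₂ : (⨅ n : ℕ, (I0R R t I0 (i + 1)) ^ n) = ⊥) :
    Function.Injective (t i) := by
  obtain ⟨f0, hf0⟩ := hI0
  obtain ⟨b1, hb1⟩ := hI1
  have key : ∀ z : R i, t i z = 0 → z = 0 := by
    intro z hz
    have hmem : ∀ n : ℕ, z ∈ (I0R R t I0 i) ^ n := by
      intro n
      induction n with
      | zero => simp [Ideal.one_eq_top]
      | succ n ih =>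
        rcases Nat.eq_zero_or_pos n with hn | hn
        · subst hn
          rw [zero_add, pow_one]
          apply my_mem_of_t_mem t I0 (hb i)
          rw [hz]
          exact Submodule.zero_mem _
        · obtain ⟨m, rfl⟩ : ∃ m, n = m + 1 := ⟨n - 1, by omega⟩
          have hspan : (I0R R t I0 i) ^ (m + 1) = Ideal.span {(chain R t i f0) ^ (m + 1)} := by
            rw [my_I0R_span t I0 hf0 i, Ideal.span_singleton_pow]
          rw [hspan] at ih
          obtain ⟨c, hc⟩ := Ideal.mem_span_singleton.mp ih
          have htc : t i c ∈ Itor (I0R R t I0 (i + 1)) (R (i + 1)) := by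
            apply my_tor_span (my_I0R_span t I0 hf0 (i + 1))
            refine ⟨m + 1, ?_⟩
            have hch : chain R t (i + 1) f0 = t i (chain R t i f0) := rfl
            have hzc : t i ((chain R t i f0) ^ (m + 1) * c) = 0 := by
              rw [← hc, hz]
            rw [hch, ← map_pow, ← map_mul, hzc]
          obtain ⟨σ, hσ_tor, hσ⟩ :=
            my_omega p hp t I0 hp0 hb F hF hd hf0 I1 hb1 hI1p hker hg i c htc
          rw [my_I0R_span t I0 hf0 i] at hσ
          obtain ⟨v, hv⟩ := Ideal.mem_span_singleton.mp hσ
          have haσ : chain R t i f0 * σ = 0 := by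
            refine (hg i).1 _ ?_ σ hσ_tor
            rw [my_I0R_span t I0 hf0 i]
            exact Ideal.mem_span_singleton_self _
          have hz2 : z = (chain R t i f0) ^ (m + 1 + 1) * v := by
            have hc2 : c = σ + chain R t i f0 * v := by rw [← hv]; ring
            calc z = (chain R t i f0) ^ (m + 1) * c := hc
            _ = (chain R t i f0) ^ m * (chain R t i f0 * σ)
                + (chain R t i f0) ^ (m + 1 + 1) * v := by
                  rw [hc2]; ring
            _ = (chain R t i f0) ^ (m + 1 + 1) * v := by
                  rw [haσ, mul_zero, zero_add]
          rw [my_I0R_span t I0 hf0 i, Ideal.span_singleton_pow]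
          exact Ideal.mem_span_singleton.mpr ⟨v, hz2⟩
    have hinf : z ∈ ⨅ n : ℕ, (I0R R t I0 i) ^ n := Submodule.mem_iInf _ |>.mpr hmem
    rw [hsep₁] at hinf
    simpa using hinf
  intro x₁ x₂ hx
  have h1 : t i (x₁ - x₂) = 0 := by rw [map_sub, hx, sub_self]
  have h2 := key _ h1
  exact sub_eq_zero.mp h2
end Preamble
end
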